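/- arXiv:2605.09857 — 10 statements merged into one kernel-verified Lean document; each statement's English description precedes it below -/
import Mathlib

section
/- (Unbiasedness of the empirical PU multicalibration estimator.) Fix n₊, n_u ≥ 1, measurable f : 𝒳 → [0,1], c : 𝒳 → [−1,1], w : [0,1] → [−1,1], and define for s⁺ ∈ 𝒳^{n₊}, s^u ∈ 𝒳^{n_u} the estimator Ĥ(s⁺, s^u) := (π₊/n₊)·Σ_{i=1}^{n₊} c(s⁺_i)·w(f(s⁺_i)) − (1/n_u)·Σ_{j=1}^{n_u} c(s^u_j)·w(f(s^u_j))·f(s^u_j). Then the expectation of Ĥ under the product measure P₊^{⊗ n₊} ⊗ P_X^{⊗ n_u} equals R_{c,w}(f). -/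
open MeasureTheory

lemma pi_map_eval' {ι : Type*} [Fintype ι] {X : Type*} [MeasurableSpace X]
    (μ : ι → Measure X) [∀ i, IsProbabilityMeasure (μ i)] (i : ι) :
    (Measure.pi μ).map (Function.eval i) = μ i := by
  classical
  ext s hs
  rw [Measure.map_apply (measurable_pi_apply i) hs, Set.eval_preimage,
    Measure.pi_pi]
  rw [Finset.prod_eq_single i]
  · simp
  · intro j _ hj; simp [Function.update_of_ne hj]
  · simp

lemma integral_pi_eval' {ι : Type*} [Fintype ι] {X : Type*} [MeasurableSpace X]
    (μ : ι → Measure X) [∀ i, IsProbabilityMeasure (μ i)] (i : ι)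
    {g : X → ℝ} (hg : Measurable g) :
    ∫ s, g (s i) ∂(Measure.pi μ) = ∫ x, g x ∂(μ i) := by
  rw [← pi_map_eval' μ i, integral_map (measurable_pi_apply i).aemeasurable
    hg.aestronglyMeasurable]

lemma integrable_comp_bounded' {Ω X : Type*} [MeasurableSpace Ω] [MeasurableSpace X]
    (μ : Measure Ω) [IsFiniteMeasure μ] {g : X → ℝ} (hg : Measurable g)
    {T : Ω → X} (hT : Measurable T) {C : ℝ} (hC : ∀ x, |g x| ≤ C) :
    Integrable (fun ω => g (T ω)) μ :=
  (integrable_const C).mono' ((hg.comp hT).aestronglyMeasurable)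
    (Filter.Eventually.of_forall fun ω => by simpa using hC (T ω))

/-- Unbiasedness of the empirical PU multicalibration estimator: the expectation
of the corrected empirical estimator under `P₊^{⊗ n₊} ⊗ P_X^{⊗ n_u}` equals
the multicalibration witness moment `R_{c,w}(f)`. -/
theorem pu_estimator_unbiased {X : Type*} [MeasurableSpace X]
    (Pp Pm : Measure X) [IsProbabilityMeasure Pp] [IsProbabilityMeasure Pm]
    (pip : ℝ) (hpi : pip ∈ Set.Icc (0:ℝ) 1)
    (np nu : ℕ) (hnp : 1 ≤ np) (hnu : 1 ≤ nu)
    (f c : X → ℝ) (w : ℝ → ℝ)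
    (hf : Measurable f) (hf01 : ∀ x, f x ∈ Set.Icc (0:ℝ) 1)
    (hc : Measurable c) (hc1 : ∀ x, c x ∈ Set.Icc (-1:ℝ) 1)
    (hw : Measurable w) (hw1 : ∀ v ∈ Set.Icc (0:ℝ) 1, w v ∈ Set.Icc (-1:ℝ) 1) :
    ∫ s : (Fin np → X) × (Fin nu → X),
        (pip / np * ∑ i, c (s.1 i) * w (f (s.1 i))
          - (1 / nu) * ∑ j, c (s.2 j) * w (f (s.2 j)) * f (s.2 j))
      ∂((Measure.pi fun _ : Fin np => Pp).prod
          (Measure.pi fun _ : Fin nu =>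
            ENNReal.ofReal pip • Pp + ENNReal.ofReal (1 - pip) • Pm))
    = pip * ∫ x, c x * w (f x) * (1 - f x) ∂Pp
      - (1 - pip) * ∫ x, c x * w (f x) * f x ∂Pm := by
  obtain ⟨hpi0, hpi1⟩ := hpi
  have hpi1' : (0:ℝ) ≤ 1 - pip := by linarith
  set PX : Measure X := ENNReal.ofReal pip • Pp + ENNReal.ofReal (1 - pip) • Pm with hPX
  have hPXprob : IsProbabilityMeasure PX := by
    constructor
    simp [hPX, ← ENNReal.ofReal_add hpi0 hpi1']
  set g₁ : X → ℝ := fun x => c x * w (f x) with hg₁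
  set g₂ : X → ℝ := fun x => c x * w (f x) * f x with hg₂
  have hg₁m : Measurable g₁ := hc.mul (hw.comp hf)
  have hg₂m : Measurable g₂ := hg₁m.mul hf
  have hg₁b : ∀ x, |g₁ x| ≤ 1 := by
    intro x
    have h1 := hc1 x
    have h2 := hw1 (f x) (hf01 x)
    have : |g₁ x| = |c x| * |w (f x)| := abs_mul _ _
    rw [this]
    calc |c x| * |w (f x)| ≤ 1 * 1 :=
          mul_le_mul (abs_le.2 ⟨h1.1, h1.2⟩) (abs_le.2 ⟨h2.1, h2.2⟩)
            (abs_nonneg _) zero_le_one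
      _ = 1 := by ring
  have hg₂b : ∀ x, |g₂ x| ≤ 1 := by
    intro x
    have h3 := hf01 x
    have : |g₂ x| = |g₁ x| * |f x| := abs_mul (g₁ x) (f x)
    rw [this]
    calc |g₁ x| * |f x| ≤ 1 * 1 :=
          mul_le_mul (hg₁b x) (abs_le.2 ⟨by linarith [h3.1], h3.2⟩)
            (abs_nonneg _) zero_le_one
      _ = 1 := by ring
  set μp := Measure.pi fun _ : Fin np => Pp with hμp
  set μu := Measure.pi fun _ : Fin nu => PX with hμu
  have hInt₁p : Integrable g₁ Pp := integrable_comp_bounded' Pp hg₁m measurable_id hg₁b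
  have hInt₂p : Integrable g₂ Pp := integrable_comp_bounded' Pp hg₂m measurable_id hg₂b
  have hInt₂m : Integrable g₂ Pm := integrable_comp_bounded' Pm hg₂m measurable_id hg₂b
  have hA : Integrable (fun s : (Fin np → X) × (Fin nu → X) =>
      pip / np * ∑ i, g₁ (s.1 i)) (μp.prod μu) := by
    refine Integrable.const_mul ?_ _
    apply integrable_finset_sum
    intro i _
    exact integrable_comp_bounded' _ hg₁m
      ((measurable_pi_apply i).comp measurable_fst) hg₁b
  have hB : Integrable (fun s : (Fin np → X) × (Fin nu → X) =>
      (1 / (nu:ℝ)) * ∑ j, g₂ (s.2 j)) (μp.prod μu) := by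
    refine Integrable.const_mul ?_ _
    apply integrable_finset_sum
    intro j _
    exact integrable_comp_bounded' _ hg₂m
      ((measurable_pi_apply j).comp measurable_snd) hg₂b
  rw [integral_sub hA hB]
  have hmapfst : (μp.prod μu).map Prod.fst = μp := Measure.fst_prod
  have hmapsnd : (μp.prod μu).map Prod.snd = μu := Measure.snd_prod
  have hAval : ∫ s : (Fin np → X) × (Fin nu → X),
      pip / np * ∑ i, g₁ (s.1 i) ∂(μp.prod μu)
      = pip * ∫ x, g₁ x ∂Pp := by
    have hFm : Measurable (fun t : Fin np → X => pip / np * ∑ i, g₁ (t i)) := by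
      apply Measurable.const_mul
      exact Finset.measurable_sum _ fun i _ => hg₁m.comp (measurable_pi_apply i)
    have step1 : ∫ s : (Fin np → X) × (Fin nu → X),
        pip / np * ∑ i, g₁ (s.1 i) ∂(μp.prod μu)
        = ∫ t, pip / np * ∑ i, g₁ (t i) ∂μp := by
      rw [← integral_map measurable_fst.aemeasurable hFm.aestronglyMeasurable, hmapfst]
    rw [step1, integral_const_mul, integral_finset_sum _ (fun i _ =>
      integrable_comp_bounded' _ hg₁m (measurable_pi_apply i) hg₁b)]
    have : ∀ i : Fin np, ∫ t, g₁ (t i) ∂μp = ∫ x, g₁ x ∂Pp := fun i =>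
      integral_pi_eval' _ i hg₁m
    rw [Finset.sum_congr rfl fun i _ => this i, Finset.sum_const,
      Finset.card_univ, Fintype.card_fin, nsmul_eq_mul]
    have hnp' : (np:ℝ) ≠ 0 := Nat.cast_ne_zero.2 (by omega)
    field_simp
  have hBval : ∫ s : (Fin np → X) × (Fin nu → X),
      (1 / (nu:ℝ)) * ∑ j, g₂ (s.2 j) ∂(μp.prod μu)
      = ∫ x, g₂ x ∂PX := by
    have hGm : Measurable (fun t : Fin nu → X => (1/(nu:ℝ)) * ∑ j, g₂ (t j)) := by
      apply Measurable.const_mul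
      exact Finset.measurable_sum _ fun j _ => hg₂m.comp (measurable_pi_apply j)
    have step1 : ∫ s : (Fin np → X) × (Fin nu → X),
        (1/(nu:ℝ)) * ∑ j, g₂ (s.2 j) ∂(μp.prod μu)
        = ∫ t, (1/(nu:ℝ)) * ∑ j, g₂ (t j) ∂μu := by
      rw [← integral_map measurable_snd.aemeasurable hGm.aestronglyMeasurable, hmapsnd]
    rw [step1, integral_const_mul, integral_finset_sum _ (fun j _ =>
      integrable_comp_bounded' _ hg₂m (measurable_pi_apply j) hg₂b)]
    have : ∀ j : Fin nu, ∫ t, g₂ (t j) ∂μu = ∫ x, g₂ x ∂PX := fun j =>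
      integral_pi_eval' _ j hg₂m
    rw [Finset.sum_congr rfl fun j _ => this j, Finset.sum_const,
      Finset.card_univ, Fintype.card_fin, nsmul_eq_mul]
    have hnu' : (nu:ℝ) ≠ 0 := Nat.cast_ne_zero.2 (by omega)
    field_simp
  rw [hAval, hBval]
  have hPXint : ∫ x, g₂ x ∂PX = pip * ∫ x, g₂ x ∂Pp + (1 - pip) * ∫ x, g₂ x ∂Pm := by
    rw [hPX, integral_add_measure (hInt₂p.smul_measure ENNReal.ofReal_ne_top)
        (hInt₂m.smul_measure ENNReal.ofReal_ne_top),
      integral_smul_measure, integral_smul_measure,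
      ENNReal.toReal_ofReal hpi0, ENNReal.toReal_ofReal hpi1']
    rfl
  rw [hPXint]
  have hsplit : ∫ x, c x * w (f x) * (1 - f x) ∂Pp
      = (∫ x, g₁ x ∂Pp) - ∫ x, g₂ x ∂Pp := by
    rw [← integral_sub hInt₁p hInt₂p]
    refine integral_congr_ae (Filter.Eventually.of_forall fun x => ?_)
    simp only [hg₁, hg₂]
    ring
  rw [hsplit]
  ring
end

section
/- (UU rewrite of the multicalibration moment.) Let γ₁, γ₂ ∈ [0,1] with Δ := 1 − γ₁ − γ₂ ≠ 0, and define the mixture measures P_{U₁} := (1−γ₁)·P₊ + γ₁·P₋ and P_{U₂} := γ₂·P₊ + (1−γ₂)·P₋, and the weight functions α₁(v) := ((1−γ₂)·π₊·(1−v) + γ₂·π₋·v)/Δ and α₂(v) := (−γ₁·π₊·(1−v) − (1−γ₁)·π₋·v)/Δ for v ∈ [0,1]. Then for all measurable f : 𝒳 → [0,1], c : 𝒳 → [−1,1], w : [0,1] → [−1,1], R_{c,w}(f) = ∫ α₁(f(x))·c(x)·w(f(x)) dP_{U₁}(x) + ∫ α₂(f(x))·c(x)·w(f(x)) dP_{U₂}(x).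 -/
open MeasureTheory

lemma integrable_of_bdd {X : Type*} [MeasurableSpace X] (μ : Measure X)
    [IsFiniteMeasure μ] {g : X → ℝ} (hg : Measurable g) {C : ℝ}
    (hC : ∀ x, |g x| ≤ C) : Integrable g μ :=
  (integrable_const C).mono' hg.aestronglyMeasurable (Filter.Eventually.of_forall hC)

/-- UU rewrite of the multicalibration witness moment in terms of two
unlabeled mixture sources `P_{U₁}`, `P_{U₂}` with known mixing proportions. -/
theorem uu_rewrite_multicalibration {X : Type*} [MeasurableSpace X]
    (Pp Pm : Measure X) [IsProbabilityMeasure Pp] [IsProbabilityMeasure Pm]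
    (pip : ℝ) (hpi : pip ∈ Set.Icc (0:ℝ) 1)
    (γ1 γ2 : ℝ) (hγ1 : γ1 ∈ Set.Icc (0:ℝ) 1) (hγ2 : γ2 ∈ Set.Icc (0:ℝ) 1)
    (hΔ : 1 - γ1 - γ2 ≠ 0)
    (f c : X → ℝ) (w : ℝ → ℝ)
    (hf : Measurable f) (hf01 : ∀ x, f x ∈ Set.Icc (0:ℝ) 1)
    (hc : Measurable c) (hc1 : ∀ x, c x ∈ Set.Icc (-1:ℝ) 1)
    (hw : Measurable w) (hw1 : ∀ v ∈ Set.Icc (0:ℝ) 1, w v ∈ Set.Icc (-1:ℝ) 1) :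
    pip * ∫ x, c x * w (f x) * (1 - f x) ∂Pp
      - (1 - pip) * ∫ x, c x * w (f x) * f x ∂Pm
    = (∫ x, ((1 - γ2) * pip * (1 - f x) + γ2 * (1 - pip) * f x) / (1 - γ1 - γ2)
            * (c x * w (f x))
          ∂(ENNReal.ofReal (1 - γ1) • Pp + ENNReal.ofReal γ1 • Pm))
      + ∫ x, (-(γ1 * pip * (1 - f x)) - (1 - γ1) * (1 - pip) * f x) / (1 - γ1 - γ2)
            * (c x * w (f x))
          ∂(ENNReal.ofReal γ2 • Pp + ENNReal.ofReal (1 - γ2) • Pm) := by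
  obtain ⟨hp0, hp1⟩ := hpi
  obtain ⟨h10, h11⟩ := hγ1
  obtain ⟨h20, h21⟩ := hγ2
  have hΔpos : (0:ℝ) < |1 - γ1 - γ2| := abs_pos.2 hΔ
  have hgm : Measurable (fun x => c x * w (f x)) := hc.mul (hw.comp hf)
  have hgb : ∀ x, |c x * w (f x)| ≤ 1 := by
    intro x
    obtain ⟨a1, a2⟩ := hc1 x
    obtain ⟨b1, b2⟩ := hw1 (f x) (hf01 x)
    rw [abs_mul]
    have hca : |c x| ≤ 1 := abs_le.2 ⟨a1, a2⟩
    have hwa : |w (f x)| ≤ 1 := abs_le.2 ⟨b1, b2⟩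
    nlinarith [abs_nonneg (c x), abs_nonneg (w (f x))]
  set h1 : X → ℝ := fun x =>
    ((1 - γ2) * pip * (1 - f x) + γ2 * (1 - pip) * f x) / (1 - γ1 - γ2)
      * (c x * w (f x)) with hh1
  set h2 : X → ℝ := fun x =>
    (-(γ1 * pip * (1 - f x)) - (1 - γ1) * (1 - pip) * f x) / (1 - γ1 - γ2)
      * (c x * w (f x)) with hh2
  have hm1 : Measurable h1 := by
    apply Measurable.mul _ hgm
    exact ((measurable_const.mul (measurable_const.sub hf)).add
      (measurable_const.mul hf)).div measurable_const
  have hm2 : Measurable h2 := by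
    apply Measurable.mul _ hgm
    exact ((measurable_const.mul (measurable_const.sub hf)).neg.sub
      (measurable_const.mul hf)).div measurable_const
  have hb1 : ∀ x, |h1 x| ≤ 2 / |1 - γ1 - γ2| := by
    intro x
    obtain ⟨hf0, hf1⟩ := hf01 x
    have hnum : |(1 - γ2) * pip * (1 - f x) + γ2 * (1 - pip) * f x| ≤ 2 := by
      rw [abs_le]; constructor <;> nlinarith
    have := hgb x
    calc |h1 x| = |(1 - γ2) * pip * (1 - f x) + γ2 * (1 - pip) * f x| / |1 - γ1 - γ2|
          * |c x * w (f x)| := by rw [hh1]; simp only; rw [abs_mul, abs_div]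
      _ ≤ 2 / |1 - γ1 - γ2| * 1 := by gcongr
      _ = 2 / |1 - γ1 - γ2| := mul_one _
  have hb2 : ∀ x, |h2 x| ≤ 2 / |1 - γ1 - γ2| := by
    intro x
    obtain ⟨hf0, hf1⟩ := hf01 x
    have hnum : |(-(γ1 * pip * (1 - f x)) - (1 - γ1) * (1 - pip) * f x)| ≤ 2 := by
      rw [abs_le]; constructor <;> nlinarith
    have := hgb x
    calc |h2 x| = |(-(γ1 * pip * (1 - f x)) - (1 - γ1) * (1 - pip) * f x)| / |1 - γ1 - γ2|
          * |c x * w (f x)| := by rw [hh2]; simp only; rw [abs_mul, abs_div]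
      _ ≤ 2 / |1 - γ1 - γ2| * 1 := by gcongr
      _ = 2 / |1 - γ1 - γ2| := mul_one _
  have hi1p : Integrable h1 Pp := integrable_of_bdd Pp hm1 hb1
  have hi1m : Integrable h1 Pm := integrable_of_bdd Pm hm1 hb1
  have hi2p : Integrable h2 Pp := integrable_of_bdd Pp hm2 hb2
  have hi2m : Integrable h2 Pm := integrable_of_bdd Pm hm2 hb2
  have e1 : (∫ x, h1 x ∂(ENNReal.ofReal (1 - γ1) • Pp + ENNReal.ofReal γ1 • Pm))
      = (1 - γ1) * ∫ x, h1 x ∂Pp + γ1 * ∫ x, h1 x ∂Pm := by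
    rw [integral_add_measure (hi1p.smul_measure ENNReal.ofReal_ne_top)
      (hi1m.smul_measure ENNReal.ofReal_ne_top),
      integral_smul_measure, integral_smul_measure,
      ENNReal.toReal_ofReal (by linarith), ENNReal.toReal_ofReal h10]
    simp [smul_eq_mul]
  have e2 : (∫ x, h2 x ∂(ENNReal.ofReal γ2 • Pp + ENNReal.ofReal (1 - γ2) • Pm))
      = γ2 * ∫ x, h2 x ∂Pp + (1 - γ2) * ∫ x, h2 x ∂Pm := by
    rw [integral_add_measure (hi2p.smul_measure ENNReal.ofReal_ne_top)
      (hi2m.smul_measure ENNReal.ofReal_ne_top),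
      integral_smul_measure, integral_smul_measure,
      ENNReal.toReal_ofReal h20, ENNReal.toReal_ofReal (by linarith)]
    simp [smul_eq_mul]
  have ep : (1 - γ1) * ∫ x, h1 x ∂Pp + γ2 * ∫ x, h2 x ∂Pp
      = pip * ∫ x, c x * w (f x) * (1 - f x) ∂Pp := by
    rw [← integral_const_mul, ← integral_const_mul, ← integral_const_mul,
      ← integral_add (hi1p.const_mul _) (hi2p.const_mul _)]
    apply integral_congr_ae
    filter_upwards with x
    rw [hh1, hh2]
    simp only
    field_simp
    ring
  have em : γ1 * ∫ x, h1 x ∂Pm + (1 - γ2) * ∫ x, h2 x ∂Pm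
      = -((1 - pip) * ∫ x, c x * w (f x) * f x ∂Pm) := by
    rw [← integral_const_mul, ← integral_const_mul, ← integral_const_mul,
      ← integral_add (hi1m.const_mul _) (hi2m.const_mul _), ← integral_neg]
    apply integral_congr_ae
    filter_upwards with x
    rw [hh1, hh2]
    simp only
    field_simp
    ring
  rw [e1, e2]
  linarith [ep, em]
end

section
/- (Pconf rewrite of the multicalibration moment.) Assume 0 < π₊ < 1, assume P₋ is absolutely continuous with respect to P₊, and let r := π₊ · (dP₊/dP_X), the Radon–Nikodym derivative of π₊·P₊ with respect to P_X := π₊·P₊ + π₋·P₋. Then for all measurable f : 𝒳 → [0,1], c : 𝒳 → [−1,1], w : [0,1] → [−1,1], R_{c,w}(f) = π₊·∫ c(x)·w(f(x))·(1 − f(x)/r(x)) dP₊(x). -/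
open MeasureTheory

/-- Pconf rewrite of the multicalibration witness moment: with
`r := π₊ · dP₊/dP_X`, the moment `R_{c,w}(f)` is expressed using only the
positive class-conditional distribution `P₊` and the confidence `r`. -/
theorem pconf_rewrite_multicalibration {X : Type*} [MeasurableSpace X]
    (Pp Pm : Measure X) [IsProbabilityMeasure Pp] [IsProbabilityMeasure Pm]
    (pip : ℝ) (hpi0 : 0 < pip) (hpi1 : pip < 1)
    (hac : Pm ≪ Pp)
    (f c : X → ℝ) (w : ℝ → ℝ)
    (hf : Measurable f) (hf01 : ∀ x, f x ∈ Set.Icc (0:ℝ) 1)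
    (hc : Measurable c) (hc1 : ∀ x, c x ∈ Set.Icc (-1:ℝ) 1)
    (hw : Measurable w) (hw1 : ∀ v ∈ Set.Icc (0:ℝ) 1, w v ∈ Set.Icc (-1:ℝ) 1) :
    pip * ∫ x, c x * w (f x) * (1 - f x) ∂Pp
      - (1 - pip) * ∫ x, c x * w (f x) * f x ∂Pm
    = pip * ∫ x, c x * w (f x) *
        (1 - f x / (pip * (Pp.rnDeriv
            (ENNReal.ofReal pip • Pp + ENNReal.ofReal (1 - pip) • Pm) x).toReal))
        ∂Pp := by
  have hpm : (0:ℝ) < 1 - pip := by linarith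
  set ν : Measure X := ENNReal.ofReal pip • Pp + ENNReal.ofReal (1 - pip) • Pm with hνdef
  haveI : IsFiniteMeasure ν := by
    constructor
    simp only [hνdef, Measure.coe_add, Pi.add_apply, Measure.smul_apply, smul_eq_mul,
      measure_univ, mul_one]
    exact ENNReal.add_lt_top.mpr ⟨ENNReal.ofReal_lt_top, ENNReal.ofReal_lt_top⟩
  have hPpν : Pp ≪ ν := by
    intro s hs
    have h1 : (ENNReal.ofReal pip • Pp) s = 0 := by
      have hle : (ENNReal.ofReal pip • Pp) s ≤ ν s := by
        exact Measure.le_iff'.1 (Measure.le_add_right le_rfl) s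
      simpa [hs] using hle
    rw [Measure.smul_apply, smul_eq_mul, mul_eq_zero] at h1
    rcases h1 with h | h
    · exact absurd h (by simp [ENNReal.ofReal_eq_zero]; linarith)
    · exact h
  have hνPp : ν ≪ Pp := by
    intro s hs
    simp only [hνdef, Measure.coe_add, Pi.add_apply, Measure.smul_apply, smul_eq_mul, hs,
      hac hs, mul_zero, add_zero]
  -- bounded measurable functions
  set h : X → ℝ := fun x => c x * w (f x) with hhdef
  set g : X → ℝ := fun x => c x * w (f x) * f x with hgdef
  have hmh : Measurable h := hc.mul (hw.comp hf)
  have hmg : Measurable g := hmh.mul hf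
  have hbh : ∀ x, ‖h x‖ ≤ 1 := by
    intro x
    have h1 := hc1 x
    have h2 := hw1 (f x) (hf01 x)
    simp only [Real.norm_eq_abs, hhdef, abs_mul]
    calc |c x| * |w (f x)| ≤ 1 * 1 := by
          apply mul_le_mul (abs_le.mpr ⟨h1.1, h1.2⟩) (abs_le.mpr ⟨h2.1, h2.2⟩)
            (abs_nonneg _) zero_le_one
      _ = 1 := by ring
  have hbg : ∀ x, ‖g x‖ ≤ 1 := by
    intro x
    have h3 := hf01 x
    show |c x * w (f x) * f x| ≤ 1
    rw [abs_mul]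
    calc |c x * w (f x)| * |f x| ≤ 1 * 1 := by
          apply mul_le_mul (hbh x) (abs_le.mpr ⟨by linarith [h3.1], h3.2⟩) (abs_nonneg _)
            zero_le_one
      _ = 1 := by ring
  have hint : ∀ (u : X → ℝ), Measurable u → (∀ x, ‖u x‖ ≤ 1) →
      ∀ (μ : Measure X), IsFiniteMeasure μ → Integrable u μ := by
    intro u hu hub μ hμ
    exact Integrable.mono' (integrable_const 1) hu.aestronglyMeasurable (ae_of_all _ hub)
  have hintPp_h : Integrable h Pp := hint h hmh hbh Pp inferInstance
  have hintPp_g : Integrable g Pp := hint g hmg hbg Pp inferInstance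
  have hintPm_g : Integrable g Pm := hint g hmg hbg Pm inferInstance
  have hintν_g : Integrable g ν := hint g hmg hbg ν inferInstance
  -- key: the rnDeriv smul integral
  have key : ∫ x, (ν.rnDeriv Pp x).toReal • g x ∂Pp = ∫ x, g x ∂ν :=
    MeasureTheory.integral_rnDeriv_smul hνPp
  have hinv : (fun x => (ν.rnDeriv Pp x).toReal)
      =ᵐ[Pp] fun x => ((Pp.rnDeriv ν x).toReal)⁻¹ := by
    filter_upwards [Measure.inv_rnDeriv hPpν] with x hx
    rw [← hx, Pi.inv_apply, ENNReal.toReal_inv]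
  have ptwise : ∀ (gx t : ℝ), pip * (gx / (pip * t)) = gx * t⁻¹ := by
    intro gx t
    rw [mul_div_assoc', mul_div_mul_left gx t hpi0.ne', div_eq_mul_inv]
  have key2 : ∫ x, (ν.rnDeriv Pp x).toReal • g x ∂Pp
      = pip * ∫ x, g x / (pip * (Pp.rnDeriv ν x).toReal) ∂Pp := by
    rw [← integral_const_mul]
    refine integral_congr_ae ?_
    filter_upwards [hinv] with x hx
    rw [smul_eq_mul, hx, ptwise (g x) ((Pp.rnDeriv ν x).toReal), mul_comm]
  have hsum : ∫ x, g x ∂ν = pip * ∫ x, g x ∂Pp + (1 - pip) * ∫ x, g x ∂Pm := by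
    rw [hνdef,
      integral_add_measure (hintPp_g.smul_measure ENNReal.ofReal_ne_top)
        (hintPm_g.smul_measure ENNReal.ofReal_ne_top),
      integral_smul_measure, integral_smul_measure,
      ENNReal.toReal_ofReal hpi0.le, ENNReal.toReal_ofReal hpm.le, smul_eq_mul, smul_eq_mul]
  -- integrability of g / r
  have hint_gr : Integrable (fun x => g x / (pip * (Pp.rnDeriv ν x).toReal)) Pp := by
    have h1 : Integrable (fun x => (ν.rnDeriv Pp x).toReal • g x) Pp :=
      (MeasureTheory.integrable_rnDeriv_smul_iff hνPp).mpr hintν_g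
    refine (h1.const_mul pip⁻¹).congr ?_
    filter_upwards [hinv] with x hx
    rw [smul_eq_mul, hx, eq_comm, mul_comm ((Pp.rnDeriv ν x).toReal)⁻¹ (g x),
      ← ptwise (g x) ((Pp.rnDeriv ν x).toReal), ← mul_assoc, inv_mul_cancel₀ hpi0.ne',
      one_mul]
  -- rewrite LHS integrals
  have e1 : ∫ x, c x * w (f x) * (1 - f x) ∂Pp = ∫ x, h x ∂Pp - ∫ x, g x ∂Pp := by
    rw [← integral_sub hintPp_h hintPp_g]
    exact integral_congr_ae (ae_of_all _ fun x => by simp only [hhdef, hgdef]; ring)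
  have e2 : ∫ x, c x * w (f x) * (1 - f x / (pip * (Pp.rnDeriv ν x).toReal)) ∂Pp
      = ∫ x, h x ∂Pp - ∫ x, g x / (pip * (Pp.rnDeriv ν x).toReal) ∂Pp := by
    rw [← integral_sub hintPp_h hint_gr]
    exact integral_congr_ae (ae_of_all _ fun x => by simp only [hhdef, hgdef]; ring)
  have hgoalc : ∫ x, c x * w (f x) * f x ∂Pm = ∫ x, g x ∂Pm := rfl
  rw [show (∫ x, c x * w (f x) * f x ∂Pm) = ∫ x, g x ∂Pm from rfl, e1, e2]
  have main : pip * ∫ x, g x / (pip * (Pp.rnDeriv ν x).toReal) ∂Pp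
      = pip * ∫ x, g x ∂Pp + (1 - pip) * ∫ x, g x ∂Pm := by
    rw [← key2, key, hsum]
  linarith [main]
end

section
/- (SU rewrite of the multicalibration moment.) Assume π₊ ≠ π₋ and π₊² + π₋² > 0, and define the similar-pair marginal P_S̃ := (π₊²/(π₊²+π₋²))·P₊ + (π₋²/(π₊²+π₋²))·P₋. Then for all measurable f : 𝒳 → [0,1], c : 𝒳 → [−1,1], w : [0,1] → [−1,1], R_{c,w}(f) = ((π₊²+π₋²)/(π₊−π₋))·∫ c(x)·w(f(x)) dP_S̃(x) − ∫ c(x)·w(f(x))·(π₋/(π₊−π₋) + f(x)) dP_X(x). -/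
open MeasureTheory

/-!
Write `g = c · w(f)`. Expanding both mixtures into their `P₊`, `P₋` parts turns both
sides into linear combinations of the four numbers `∫ g dP±`, `∫ g f dP±`. The
`P_S̃` term contributes `(π₊² ∫ g dP₊ + π₋² ∫ g dP₋) / (π₊ - π₋)`, and the shift
`π₋ / (π₊ - π₋)` in the `P_X` term is chosen so that it cancels the `P₋` part of this and
leaves `π₊ ∫ g dP₊`, since `π₊² - π₊π₋ = π₊ (π₊ - π₋)`.
-/

section

variable {X : Type*} [MeasurableSpace X] {μ ν : Measure X}

theorem integral_ofReal_smul_add_ofReal_smul_measure {E : Type*} [NormedAddCommGroup E]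
    [NormedSpace ℝ E] {g : X → E}
    (hμ : Integrable g μ) (hν : Integrable g ν) {a b : ℝ} (ha : 0 ≤ a) (hb : 0 ≤ b) :
    ∫ x, g x ∂(ENNReal.ofReal a • μ + ENNReal.ofReal b • ν)
      = a • ∫ x, g x ∂μ + b • ∫ x, g x ∂ν := by
  rw [integral_add_measure (hμ.smul_measure ENNReal.ofReal_ne_top)
      (hν.smul_measure ENNReal.ofReal_ne_top),
    integral_smul_measure, integral_smul_measure, ENNReal.toReal_ofReal ha,
    ENNReal.toReal_ofReal hb]

theorem su_rewrite_of_integrable {p : ℝ} (hp : p ∈ Set.Icc (0 : ℝ) 1) (hne : p ≠ 1 - p)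
    {g h : X → ℝ}
    (hgμ : Integrable g μ) (hgν : Integrable g ν)
    (hghμ : Integrable (fun x => g x * h x) μ) (hghν : Integrable (fun x => g x * h x) ν) :
    p * ∫ x, g x * (1 - h x) ∂μ - (1 - p) * ∫ x, g x * h x ∂ν
    = (p ^ 2 + (1 - p) ^ 2) / (p - (1 - p)) *
        ∫ x, g x
          ∂(ENNReal.ofReal (p ^ 2 / (p ^ 2 + (1 - p) ^ 2)) • μ
            + ENNReal.ofReal ((1 - p) ^ 2 / (p ^ 2 + (1 - p) ^ 2)) • ν)
      - ∫ x, g x * ((1 - p) / (p - (1 - p)) + h x)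
          ∂(ENNReal.ofReal p • μ + ENNReal.ofReal (1 - p) • ν) := by
  obtain ⟨hp0, hp1⟩ := hp
  have hpq : p - (1 - p) ≠ 0 := sub_ne_zero.mpr hne
  have hs : p ^ 2 + (1 - p) ^ 2 ≠ 0 := by nlinarith
  set k := (1 - p) / (p - (1 - p))
  simp only [mul_add, mul_sub, mul_one]
  rw [integral_ofReal_smul_add_ofReal_smul_measure hgμ hgν (by positivity) (by positivity),
    integral_ofReal_smul_add_ofReal_smul_measure (g := fun x => g x * k + g x * h x)
      ((hgμ.mul_const k).add hghμ) ((hgν.mul_const k).add hghν) hp0 (sub_nonneg.mpr hp1),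
    integral_sub hgμ hghμ, integral_add (hgμ.mul_const k) hghμ,
    integral_add (hgν.mul_const k) hghν, integral_mul_const, integral_mul_const]
  simp only [smul_eq_mul, k]
  field_simp
  ring

end

theorem su_rewrite_multicalibration_general {X : Type*} [MeasurableSpace X]
    (Pp Pm : Measure X) [IsProbabilityMeasure Pp] [IsProbabilityMeasure Pm]
    (pip : ℝ) (hpi : pip ∈ Set.Icc (0:ℝ) 1)
    (hne : pip ≠ 1 - pip)
    (f c : X → ℝ) (w : ℝ → ℝ)
    (hf : Measurable f) (hf01 : ∀ x, f x ∈ Set.Icc (0:ℝ) 1)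
    (hc : Measurable c) (hc1 : ∀ x, c x ∈ Set.Icc (-1:ℝ) 1)
    (hw : Measurable w) (hw1 : ∀ v ∈ Set.Icc (0:ℝ) 1, w v ∈ Set.Icc (-1:ℝ) 1) :
    pip * ∫ x, c x * w (f x) * (1 - f x) ∂Pp
      - (1 - pip) * ∫ x, c x * w (f x) * f x ∂Pm
    = (pip ^ 2 + (1 - pip) ^ 2) / (pip - (1 - pip)) *
        ∫ x, c x * w (f x)
          ∂(ENNReal.ofReal (pip ^ 2 / (pip ^ 2 + (1 - pip) ^ 2)) • Pp
            + ENNReal.ofReal ((1 - pip) ^ 2 / (pip ^ 2 + (1 - pip) ^ 2)) • Pm)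
      - ∫ x, c x * w (f x) * ((1 - pip) / (pip - (1 - pip)) + f x)
          ∂(ENNReal.ofReal pip • Pp + ENNReal.ofReal (1 - pip) • Pm) := by
  have hg_le : ∀ x, ‖c x * w (f x)‖ ≤ 1 := fun x => by
    rw [norm_mul]
    exact mul_le_one₀ (abs_le.mpr (hc1 x)) (norm_nonneg _) (abs_le.mpr (hw1 _ (hf01 x)))
  have hf_le : ∀ x, ‖f x‖ ≤ 1 := fun x => abs_le.mpr ⟨by linarith [(hf01 x).1], (hf01 x).2⟩
  have hg : ∀ (μ : Measure X) [IsFiniteMeasure μ], Integrable (fun x => c x * w (f x)) μ :=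
    fun μ _ => .of_bound (hc.mul (hw.comp hf)).aestronglyMeasurable 1 (ae_of_all _ hg_le)
  have hgf : ∀ (μ : Measure X) [IsFiniteMeasure μ],
      Integrable (fun x => c x * w (f x) * f x) μ :=
    fun μ _ => (hg μ).mul_bdd hf.aestronglyMeasurable (ae_of_all _ hf_le)
  exact su_rewrite_of_integrable hpi hne (hg Pp) (hg Pm) (hgf Pp) (hgf Pm)

/-- SU rewrite of the multicalibration witness moment in terms of the
similar-pair marginal `P_S̃` and the marginal `P_X`. -/
theorem su_rewrite_multicalibration {X : Type*} [MeasurableSpace X]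
    (Pp Pm : Measure X) [IsProbabilityMeasure Pp] [IsProbabilityMeasure Pm]
    (pip : ℝ) (hpi : pip ∈ Set.Icc (0:ℝ) 1)
    (hne : pip ≠ 1 - pip) (hpos : 0 < pip ^ 2 + (1 - pip) ^ 2)
    (f c : X → ℝ) (w : ℝ → ℝ)
    (hf : Measurable f) (hf01 : ∀ x, f x ∈ Set.Icc (0:ℝ) 1)
    (hc : Measurable c) (hc1 : ∀ x, c x ∈ Set.Icc (-1:ℝ) 1)
    (hw : Measurable w) (hw1 : ∀ v ∈ Set.Icc (0:ℝ) 1, w v ∈ Set.Icc (-1:ℝ) 1) :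
    pip * ∫ x, c x * w (f x) * (1 - f x) ∂Pp
      - (1 - pip) * ∫ x, c x * w (f x) * f x ∂Pm
    = (pip ^ 2 + (1 - pip) ^ 2) / (pip - (1 - pip)) *
        ∫ x, c x * w (f x)
          ∂(ENNReal.ofReal (pip ^ 2 / (pip ^ 2 + (1 - pip) ^ 2)) • Pp
            + ENNReal.ofReal ((1 - pip) ^ 2 / (pip ^ 2 + (1 - pip) ^ 2)) • Pm)
      - ∫ x, c x * w (f x) * ((1 - pip) / (pip - (1 - pip)) + f x)
          ∂(ENNReal.ofReal pip • Pp + ENNReal.ofReal (1 - pip) • Pm) :=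
  su_rewrite_multicalibration_general Pp Pm pip hpi hne f c w hf hf01 hc hc1 hw hw1
end

section
/- (DU rewrite of the multicalibration moment.) Assume π₊ ≠ π₋, and define the dissimilar-pair marginal P_D̃ := (1/2)·P₊ + (1/2)·P₋. Then for all measurable f : 𝒳 → [0,1], c : 𝒳 → [−1,1], w : [0,1] → [−1,1], R_{c,w}(f) = −(2·π₊·π₋/(π₊−π₋))·∫ c(x)·w(f(x)) dP_D̃(x) + ∫ c(x)·w(f(x))·(π₊/(π₊−π₋) − f(x)) dP_X(x). -/
open MeasureTheory

lemma integrable_of_bdd1 {X : Type*} [MeasurableSpace X] (μ : Measure X) [IsFiniteMeasure μ]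
    (φ : X → ℝ) (hm : Measurable φ) (hb : ∀ x, |φ x| ≤ 1) : Integrable φ μ :=
  ⟨hm.aestronglyMeasurable,
    HasFiniteIntegral.of_bounded (C := 1) (ae_of_all _ (by simpa using hb))⟩

/-- DU rewrite of the multicalibration witness moment in terms of the
dissimilar-pair marginal `P_D̃` and the marginal `P_X`. -/
theorem du_rewrite_multicalibration {X : Type*} [MeasurableSpace X]
    (Pp Pm : Measure X) [IsProbabilityMeasure Pp] [IsProbabilityMeasure Pm]
    (pip : ℝ) (hpi : pip ∈ Set.Icc (0:ℝ) 1)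
    (hne : pip ≠ 1 - pip)
    (f c : X → ℝ) (w : ℝ → ℝ)
    (hf : Measurable f) (hf01 : ∀ x, f x ∈ Set.Icc (0:ℝ) 1)
    (hc : Measurable c) (hc1 : ∀ x, c x ∈ Set.Icc (-1:ℝ) 1)
    (hw : Measurable w) (hw1 : ∀ v ∈ Set.Icc (0:ℝ) 1, w v ∈ Set.Icc (-1:ℝ) 1) :
    pip * ∫ x, c x * w (f x) * (1 - f x) ∂Pp
      - (1 - pip) * ∫ x, c x * w (f x) * f x ∂Pm
    = -(2 * pip * (1 - pip) / (pip - (1 - pip))) *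
        ∫ x, c x * w (f x)
          ∂(ENNReal.ofReal (1 / 2) • Pp + ENNReal.ofReal (1 / 2) • Pm)
      + ∫ x, c x * w (f x) * (pip / (pip - (1 - pip)) - f x)
          ∂(ENNReal.ofReal pip • Pp + ENNReal.ofReal (1 - pip) • Pm) := by
  obtain ⟨hp0, hp1⟩ := hpi
  have hd : pip - (1 - pip) ≠ 0 := sub_ne_zero.mpr hne
  set k : ℝ := pip / (pip - (1 - pip)) with hk
  set g : X → ℝ := fun x => c x * w (f x) with hgdef
  have hgm : Measurable g := hc.mul (hw.comp hf)
  have hgb : ∀ x, |g x| ≤ 1 := by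
    intro x
    have h1 : |c x| ≤ 1 := abs_le.2 ⟨(hc1 x).1, (hc1 x).2⟩
    have h2 : |w (f x)| ≤ 1 := abs_le.2 ⟨(hw1 (f x) (hf01 x)).1, (hw1 (f x) (hf01 x)).2⟩
    calc |g x| = |c x| * |w (f x)| := abs_mul _ _
      _ ≤ 1 * 1 := mul_le_mul h1 h2 (abs_nonneg _) zero_le_one
      _ = 1 := one_mul 1
  have hgfm : Measurable (fun x => g x * f x) := hgm.mul hf
  have hgfb : ∀ x, |g x * f x| ≤ 1 := by
    intro x
    have h3 : |f x| ≤ 1 := abs_le.2 ⟨by linarith [(hf01 x).1], (hf01 x).2⟩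
    calc |g x * f x| = |g x| * |f x| := abs_mul _ _
      _ ≤ 1 * 1 := mul_le_mul (hgb x) h3 (abs_nonneg _) zero_le_one
      _ = 1 := one_mul 1
  have intGp : Integrable g Pp := integrable_of_bdd1 Pp g hgm hgb
  have intGm : Integrable g Pm := integrable_of_bdd1 Pm g hgm hgb
  have intHp : Integrable (fun x => g x * f x) Pp := integrable_of_bdd1 Pp _ hgfm hgfb
  have intHm : Integrable (fun x => g x * f x) Pm := integrable_of_bdd1 Pm _ hgfm hgfb
  set Gp := ∫ x, g x ∂Pp
  set Gm := ∫ x, g x ∂Pm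
  set Hp := ∫ x, g x * f x ∂Pp
  set Hm := ∫ x, g x * f x ∂Pm
  -- LHS integrals
  have L1 : ∫ x, c x * w (f x) * (1 - f x) ∂Pp = Gp - Hp := by
    have : (fun x => c x * w (f x) * (1 - f x)) = fun x => g x - g x * f x := by
      funext x; simp [hgdef]; ring
    rw [this, integral_sub intGp intHp]
  -- general expansion over the combined measure
  have expand : ∀ (a b : ℝ), 0 ≤ a → 0 ≤ b → ∀ (φ : X → ℝ),
      Integrable φ Pp → Integrable φ Pm →
      ∫ x, φ x ∂(ENNReal.ofReal a • Pp + ENNReal.ofReal b • Pm)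
        = a * ∫ x, φ x ∂Pp + b * ∫ x, φ x ∂Pm := by
    intro a b ha hb φ h1 h2
    rw [integral_add_measure (h1.smul_measure ENNReal.ofReal_ne_top)
        (h2.smul_measure ENNReal.ofReal_ne_top),
      integral_smul_measure, integral_smul_measure,
      ENNReal.toReal_ofReal ha, ENNReal.toReal_ofReal hb]
    simp [smul_eq_mul]
  have E1 : ∫ x, g x ∂(ENNReal.ofReal (1 / 2) • Pp + ENNReal.ofReal (1 / 2) • Pm)
      = (1/2) * Gp + (1/2) * Gm :=
    expand (1/2) (1/2) (by norm_num) (by norm_num) g intGp intGm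
  have hmix : ∀ (μ : Measure X) [IsProbabilityMeasure μ],
      Integrable g μ → Integrable (fun x => g x * f x) μ →
      ∫ x, c x * w (f x) * (k - f x) ∂μ = k * ∫ x, g x ∂μ - ∫ x, g x * f x ∂μ := by
    intro μ _ h1 h2
    have : (fun x => c x * w (f x) * (k - f x)) = fun x => k * g x - g x * f x := by
      funext x; simp [hgdef]; ring
    rw [this, integral_sub (h1.const_mul k) h2, integral_const_mul]
  have E2 : ∫ x, c x * w (f x) * (k - f x)
      ∂(ENNReal.ofReal pip • Pp + ENNReal.ofReal (1 - pip) • Pm)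
      = pip * (k * Gp - Hp) + (1 - pip) * (k * Gm - Hm) := by
    have hb2 : Integrable (fun x => c x * w (f x) * (k - f x)) Pp := by
      have : (fun x => c x * w (f x) * (k - f x)) = fun x => k * g x - g x * f x := by
        funext x; simp [hgdef]; ring
      rw [this]; exact (intGp.const_mul k).sub intHp
    have hb3 : Integrable (fun x => c x * w (f x) * (k - f x)) Pm := by
      have : (fun x => c x * w (f x) * (k - f x)) = fun x => k * g x - g x * f x := by
        funext x; simp [hgdef]; ring
      rw [this]; exact (intGm.const_mul k).sub intHm
    rw [expand pip (1 - pip) hp0 (by linarith) _ hb2 hb3,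
      hmix Pp intGp intHp, hmix Pm intGm intHm]
  have hgoal : (∫ x, c x * w (f x) ∂(ENNReal.ofReal (1 / 2) • Pp + ENNReal.ofReal (1 / 2) • Pm))
      = ∫ x, g x ∂(ENNReal.ofReal (1 / 2) • Pp + ENNReal.ofReal (1 / 2) • Pm) := rfl
  rw [L1, hgoal, E1, E2]
  simp only [hk]
  field_simp
  ring
end

section
/- (SD rewrite of the multicalibration moment.) Assume π₊ ≠ π₋ and π₊² + π₋² > 0, define P_S̃ := (π₊²/(π₊²+π₋²))·P₊ + (π₋²/(π₊²+π₋²))·P₋ and P_D̃ := (1/2)·P₊ + (1/2)·P₋. Then for all measurable f : 𝒳 → [0,1], c : 𝒳 → [−1,1], w : [0,1] → [−1,1], R_{c,w}(f) = (π₊²+π₋²)·∫ c(x)·w(f(x))·(π₊/(π₊−π₋) − f(x)) dP_S̃(x) − 2·π₊·π₋·∫ c(x)·w(f(x))·(π₋/(π₊−π₋) + f(x)) dP_D̃(x). -/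
open MeasureTheory

/-! Writing `g := c · w ∘ f`, every integral in the identity is affine in the four numbers
`∫ g dP₊`, `∫ g f dP₊`, `∫ g dP₋`, `∫ g f dP₋`, since integrals against a mixture of `P₊`
and `P₋` are the corresponding convex combinations. Comparing coefficients leaves a rational
identity in `π₊`, valid as long as `π₊ - π₋ ≠ 0`. -/

namespace MeasureTheory

variable {X : Type*} [MeasurableSpace X] {μ ν : Measure X}

theorem integral_ofReal_smul_add_ofReal_smul {h : X → ℝ} (hμ : Integrable h μ)
    (hν : Integrable h ν) {r s : ℝ} (hr : 0 ≤ r) (hs : 0 ≤ s) :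
    ∫ x, h x ∂(ENNReal.ofReal r • μ + ENNReal.ofReal s • ν)
      = r * ∫ x, h x ∂μ + s * ∫ x, h x ∂ν := by
  rw [integral_add_measure (hμ.smul_measure ENNReal.ofReal_ne_top)
      (hν.smul_measure ENNReal.ofReal_ne_top), integral_smul_measure, integral_smul_measure,
    ENNReal.toReal_ofReal hr, ENNReal.toReal_ofReal hs, smul_eq_mul, smul_eq_mul]

variable {g f : X → ℝ} (hg : Integrable g μ) (hgf : Integrable (fun x => g x * f x) μ)
include hg hgf

theorem Integrable.mul_const_add (a : ℝ) : Integrable (fun x => g x * (a + f x)) μ := by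
  simp only [mul_add]
  exact (hg.mul_const a).add hgf

theorem Integrable.mul_const_sub (a : ℝ) : Integrable (fun x => g x * (a - f x)) μ := by
  simp only [mul_sub]
  exact (hg.mul_const a).sub hgf

theorem integral_mul_const_add (a : ℝ) :
    ∫ x, g x * (a + f x) ∂μ = a * ∫ x, g x ∂μ + ∫ x, g x * f x ∂μ := by
  simp only [mul_add, mul_comm _ a]
  rw [integral_add (hg.const_mul a) (by simpa only [mul_comm] using hgf), integral_const_mul]

theorem integral_mul_const_sub (a : ℝ) :
    ∫ x, g x * (a - f x) ∂μ = a * ∫ x, g x ∂μ - ∫ x, g x * f x ∂μ := by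
  simp only [mul_sub, mul_comm _ a]
  rw [integral_sub (hg.const_mul a) (by simpa only [mul_comm] using hgf), integral_const_mul]

end MeasureTheory

theorem sd_rewrite_multicalibration_general {X : Type*} [MeasurableSpace X]
    (Pp Pm : Measure X) [IsProbabilityMeasure Pp] [IsProbabilityMeasure Pm]
    (pip : ℝ)
    (hne : pip ≠ 1 - pip)
    (f c : X → ℝ) (w : ℝ → ℝ)
    (hf : Measurable f) (hf01 : ∀ x, f x ∈ Set.Icc (0:ℝ) 1)
    (hc : Measurable c) (hc1 : ∀ x, c x ∈ Set.Icc (-1:ℝ) 1)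
    (hw : Measurable w) (hw1 : ∀ v ∈ Set.Icc (0:ℝ) 1, w v ∈ Set.Icc (-1:ℝ) 1) :
    pip * ∫ x, c x * w (f x) * (1 - f x) ∂Pp
      - (1 - pip) * ∫ x, c x * w (f x) * f x ∂Pm
    = (pip ^ 2 + (1 - pip) ^ 2) *
        ∫ x, c x * w (f x) * (pip / (pip - (1 - pip)) - f x)
          ∂(ENNReal.ofReal (pip ^ 2 / (pip ^ 2 + (1 - pip) ^ 2)) • Pp
            + ENNReal.ofReal ((1 - pip) ^ 2 / (pip ^ 2 + (1 - pip) ^ 2)) • Pm)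
      - 2 * pip * (1 - pip) *
        ∫ x, c x * w (f x) * ((1 - pip) / (pip - (1 - pip)) + f x)
          ∂(ENNReal.ofReal (1 / 2) • Pp + ENNReal.ofReal (1 / 2) • Pm) := by
  set g : X → ℝ := fun x => c x * w (f x)
  have hg_le : ∀ x, |g x| ≤ 1 := fun x => by
    rw [abs_mul]
    exact mul_le_one₀ (abs_le.2 (hc1 x)) (abs_nonneg _) (abs_le.2 (hw1 (f x) (hf01 x)))
  have hgf_le : ∀ x, |g x * f x| ≤ 1 := fun x => by
    rw [abs_mul, abs_of_nonneg (hf01 x).1]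
    exact mul_le_one₀ (hg_le x) (hf01 x).1 (hf01 x).2
  have hint : ∀ (μ : Measure X) [IsProbabilityMeasure μ],
      Integrable g μ ∧ Integrable (fun x => g x * f x) μ := fun μ _ =>
    ⟨Integrable.of_bound (hc.mul (hw.comp hf)).aestronglyMeasurable 1 (.of_forall hg_le),
      Integrable.of_bound ((hc.mul (hw.comp hf)).mul hf).aestronglyMeasurable 1
        (.of_forall hgf_le)⟩
  obtain ⟨hgp, hgfp⟩ := hint Pp
  obtain ⟨hgm, hgfm⟩ := hint Pm
  have hs : 0 < pip ^ 2 + (1 - pip) ^ 2 := by nlinarith [sq_nonneg (2 * pip - 1)]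
  have hd : pip - (1 - pip) ≠ 0 := sub_ne_zero.2 hne
  rw [integral_ofReal_smul_add_ofReal_smul (hgp.mul_const_sub hgfp _) (hgm.mul_const_sub hgfm _)
      (by positivity) (by positivity),
    integral_ofReal_smul_add_ofReal_smul (hgp.mul_const_add hgfp _) (hgm.mul_const_add hgfm _)
      (by norm_num) (by norm_num),
    integral_mul_const_sub hgp hgfp, integral_mul_const_sub hgp hgfp,
    integral_mul_const_sub hgm hgfm,
    integral_mul_const_add hgp hgfp, integral_mul_const_add hgm hgfm]
  field_simp
  ring

/-- SD rewrite of the multicalibration witness moment in terms of the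
similar-pair marginal `P_S̃` and the dissimilar-pair marginal `P_D̃`. -/
theorem sd_rewrite_multicalibration {X : Type*} [MeasurableSpace X]
    (Pp Pm : Measure X) [IsProbabilityMeasure Pp] [IsProbabilityMeasure Pm]
    (pip : ℝ) (hpi : pip ∈ Set.Icc (0:ℝ) 1)
    (hne : pip ≠ 1 - pip) (hpos : 0 < pip ^ 2 + (1 - pip) ^ 2)
    (f c : X → ℝ) (w : ℝ → ℝ)
    (hf : Measurable f) (hf01 : ∀ x, f x ∈ Set.Icc (0:ℝ) 1)
    (hc : Measurable c) (hc1 : ∀ x, c x ∈ Set.Icc (-1:ℝ) 1)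
    (hw : Measurable w) (hw1 : ∀ v ∈ Set.Icc (0:ℝ) 1, w v ∈ Set.Icc (-1:ℝ) 1) :
    pip * ∫ x, c x * w (f x) * (1 - f x) ∂Pp
      - (1 - pip) * ∫ x, c x * w (f x) * f x ∂Pm
    = (pip ^ 2 + (1 - pip) ^ 2) *
        ∫ x, c x * w (f x) * (pip / (pip - (1 - pip)) - f x)
          ∂(ENNReal.ofReal (pip ^ 2 / (pip ^ 2 + (1 - pip) ^ 2)) • Pp
            + ENNReal.ofReal ((1 - pip) ^ 2 / (pip ^ 2 + (1 - pip) ^ 2)) • Pm)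
      - 2 * pip * (1 - pip) *
        ∫ x, c x * w (f x) * ((1 - pip) / (pip - (1 - pip)) + f x)
          ∂(ENNReal.ofReal (1 / 2) • Pp + ENNReal.ofReal (1 / 2) • Pm) :=
  sd_rewrite_multicalibration_general Pp Pm pip hne f c w hf hf01 hc hc1 hw hw1
end

section
/- (Single-step potential decrease for weak-label multicalibration boost.) Let μ be a probability measure on a measurable space 𝒳, let f, f★ : 𝒳 → [0,1] be measurable, let ε > 0, τ ∈ {−1, +1}, and let c : 𝒳 → [−1,1] and w : [0,1] → [−1,1] be measurable with τ·∫ c(x)·w(f(x))·(f★(x) − f(x)) dμ(x) ≥ ε/2. Define the updated predictor f'(x) := min(1, max(0, f(x) + (ε/2)·τ·c(x)·w(f(x)))). Then ∫ (f'(x) − f★(x))² dμ(x) ≤ ∫ (f(x) − f★(x))² dμ(x) − ε²/4. -/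
/-!
Write `g = c · (w ∘ f)` and `δ = (ε/2) τ`. Projecting onto `[0,1]` can only move a point closer
to `f★ x ∈ [0,1]`, so pointwise `(f' - f★)² ≤ (f + δ g - f★)² ≤ (f - f★)² - 2δ g (f★ - f) + δ²`,
using `|g| ≤ 1`. Integrating, the cross term is at most `-2 · (ε/2)²` by the correlation gap,
while the quadratic term is `δ² = ε²/4`.
-/

open MeasureTheory

theorem sq_min_max_sub_le {a b y z : ℝ} (hz : z ∈ Set.Icc a b) :
    (min b (max a y) - z) ^ 2 ≤ (y - z) ^ 2 := by
  obtain ⟨haz, hzb⟩ := hz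
  rcases le_total y a with hya | hay
  · rw [max_eq_left hya, min_eq_right (haz.trans hzb)]
    nlinarith
  · rcases le_total y b with hyb | hby
    · rw [max_eq_right hay, min_eq_right hyb]
    · rw [max_eq_right hay, min_eq_left hby]
      nlinarith

theorem sq_sub_le_one_of_mem_Icc {u v : ℝ} (hu : u ∈ Set.Icc (0 : ℝ) 1)
    (hv : v ∈ Set.Icc (0 : ℝ) 1) : |(u - v) ^ 2| ≤ 1 := by
  rw [abs_pow]
  exact pow_le_one₀ (abs_nonneg _) (abs_sub_le_of_nonneg_of_le hu.1 hu.2 hv.1 hv.2)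

theorem integral_sq_min_max_add_sub_le {X : Type*} [MeasurableSpace X]
    (μ : Measure X) [IsProbabilityMeasure μ] {f fstar g : X → ℝ}
    (hf : Measurable f) (hf01 : ∀ x, f x ∈ Set.Icc (0 : ℝ) 1)
    (hfs : Measurable fstar) (hfs01 : ∀ x, fstar x ∈ Set.Icc (0 : ℝ) 1)
    (hg : Measurable g) (hg1 : ∀ x, |g x| ≤ 1) (δ : ℝ) :
    ∫ x, (min 1 (max 0 (f x + δ * g x)) - fstar x) ^ 2 ∂μ
      ≤ (∫ x, (f x - fstar x) ^ 2 ∂μ) - 2 * δ * (∫ x, g x * (fstar x - f x) ∂μ) + δ ^ 2 := by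
  have hsq : Integrable (fun x ↦ (f x - fstar x) ^ 2) μ :=
    .of_bound ((hf.sub hfs).pow_const 2).aestronglyMeasurable 1
      (.of_forall fun x ↦ sq_sub_le_one_of_mem_Icc (hf01 x) (hfs01 x))
  have hcross : Integrable (fun x ↦ g x * (fstar x - f x)) μ :=
    .of_bound (hg.mul (hfs.sub hf)).aestronglyMeasurable 1 (.of_forall fun x ↦ by
      rw [Real.norm_eq_abs, abs_mul]
      exact mul_le_one₀ (hg1 x) (abs_nonneg _)
        (abs_sub_le_of_nonneg_of_le (hfs01 x).1 (hfs01 x).2 (hf01 x).1 (hf01 x).2))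
  have hpointwise : ∀ x, (min 1 (max 0 (f x + δ * g x)) - fstar x) ^ 2
      ≤ (f x - fstar x) ^ 2 - 2 * δ * (g x * (fstar x - f x)) + δ ^ 2 := fun x ↦ by
    have hg2 : g x ^ 2 ≤ 1 := by
      rw [← sq_abs]
      exact pow_le_one₀ (abs_nonneg _) (hg1 x)
    calc (min 1 (max 0 (f x + δ * g x)) - fstar x) ^ 2
        ≤ (f x + δ * g x - fstar x) ^ 2 := sq_min_max_sub_le (hfs01 x)
      _ = (f x - fstar x) ^ 2 - 2 * δ * (g x * (fstar x - f x)) + δ ^ 2 * g x ^ 2 := by ring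
      _ ≤ (f x - fstar x) ^ 2 - 2 * δ * (g x * (fstar x - f x)) + δ ^ 2 := by
        nlinarith [sq_nonneg δ]
  calc ∫ x, (min 1 (max 0 (f x + δ * g x)) - fstar x) ^ 2 ∂μ
      ≤ ∫ x, ((f x - fstar x) ^ 2 - 2 * δ * (g x * (fstar x - f x)) + δ ^ 2) ∂μ :=
        integral_mono_of_nonneg (.of_forall fun x ↦ sq_nonneg _)
          ((hsq.sub (hcross.const_mul _)).add (integrable_const _))
          (.of_forall hpointwise)
    _ = (∫ x, (f x - fstar x) ^ 2 ∂μ) - 2 * δ * (∫ x, g x * (fstar x - f x) ∂μ) + δ ^ 2 := by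
        rw [integral_add ?_ (integrable_const _), integral_sub hsq (hcross.const_mul _),
          integral_const_mul, integral_const, probReal_univ, one_smul]
        exact hsq.sub (hcross.const_mul _)

/-- Single-step potential decrease for weak-label multicalibration boost:
one boosting update along a violated witness decreases the squared distance
to `f★` by at least `ε²/4`. -/
theorem wlmc_single_step_decrease {X : Type*} [MeasurableSpace X]
    (μ : Measure X) [IsProbabilityMeasure μ]
    (f fstar c : X → ℝ) (w : ℝ → ℝ)
    (hf : Measurable f) (hf01 : ∀ x, f x ∈ Set.Icc (0:ℝ) 1)
    (hfs : Measurable fstar) (hfs01 : ∀ x, fstar x ∈ Set.Icc (0:ℝ) 1)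
    (hc : Measurable c) (hc1 : ∀ x, c x ∈ Set.Icc (-1:ℝ) 1)
    (hw : Measurable w) (hw1 : ∀ v ∈ Set.Icc (0:ℝ) 1, w v ∈ Set.Icc (-1:ℝ) 1)
    (ε : ℝ) (hε : 0 < ε) (τ : ℝ) (hτ : τ = -1 ∨ τ = 1)
    (hgap : ε / 2 ≤ τ * ∫ x, c x * w (f x) * (fstar x - f x) ∂μ) :
    ∫ x, (min 1 (max 0 (f x + ε / 2 * τ * (c x * w (f x)))) - fstar x) ^ 2 ∂μ
      ≤ (∫ x, (f x - fstar x) ^ 2 ∂μ) - ε ^ 2 / 4 := by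
  have hwitness : ∀ x, |c x * w (f x)| ≤ 1 := fun x ↦ by
    rw [abs_mul]
    exact mul_le_one₀ (abs_le.2 (hc1 x)) (abs_nonneg _) (abs_le.2 (hw1 _ (hf01 x)))
  have hstep := integral_sq_min_max_add_sub_le μ (g := fun x ↦ c x * w (f x)) hf hf01 hfs hfs01
    (hc.mul (hw.comp hf)) hwitness (ε / 2 * τ)
  have hδsq : (ε / 2 * τ) ^ 2 = ε ^ 2 / 4 := by
    rcases hτ with rfl | rfl <;> ring
  have hcorr : ε * (ε / 2) ≤ ε * (τ * ∫ x, c x * w (f x) * (fstar x - f x) ∂μ) :=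
    mul_le_mul_of_nonneg_left hgap hε.le
  rw [hδsq] at hstep
  linarith
end

section
/- (Finite-class uniform deviation of the PU multicalibration estimator.) Let 𝒞 be a nonempty finite set of measurable functions c : 𝒳 → [−1,1], 𝒲 a nonempty finite set of measurable functions w : [0,1] → [−1,1], f : 𝒳 → [0,1] measurable, n₊, n_u ≥ 1, and δ ∈ (0,1). For s⁺ ∈ 𝒳^{n₊}, s^u ∈ 𝒳^{n_u} define Ĥ_{c,w}(s⁺, s^u) := (π₊/n₊)·Σ_{i=1}^{n₊} c(s⁺_i)·w(f(s⁺_i)) − (1/n_u)·Σ_{j=1}^{n_u} c(s^u_j)·w(f(s^u_j))·f(s^u_j). Then under the product measure P₊^{⊗ n₊} ⊗ P_X^{⊗ n_u}, with probability at least 1 − δ, max_{c ∈ 𝒞, w ∈ 𝒲} |Ĥ_{c,w}(s⁺, s^u) − R_{c,w}(f)| ≤ π₊·√(2·log(4·|𝒞|·|𝒲|/δ)/n₊) + √(2·log(4·|𝒞|·|𝒲|/δ)/n_u); in particular, |max_{c,w}|Ĥ_{c,w}| − max_{c,w}|R_{c,w}(f)|| is bounded by the same quantity. -/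
/-!
For fixed `c, w` put `g = c · (w ∘ f)`. Since `P_X = π₊ P₊ + π₋ P₋`, the moment is
`R = π₊ E_{P₊}[g] - E_{P_X}[g f]`, so `Ĥ - R` is `π₊` times the deviation of the positive-sample
mean of `g` plus the deviation of the unlabeled-sample mean of `g f`. Both summands are bounded
by `1`, so Hoeffding's inequality bounds each deviation by `√(2 L / n)` outside an event of
probability `2 e^{-L} = δ / (2 |𝒞| |𝒲|)`, where `L = log (4 |𝒞| |𝒲| / δ)`; a union bound over
the `2 |𝒞| |𝒲|` events gives the first claim, and the second follows because a maximum over a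
finite set is `1`-Lipschitz for the sup-distance.
-/

open MeasureTheory ProbabilityTheory Real

noncomputable def meanDeviation {Ω : Type*} [MeasurableSpace Ω] (P : Measure Ω) (g : Ω → ℝ) {n : ℕ}
    (s : Fin n → Ω) : ℝ :=
  |(n : ℝ)⁻¹ * ∑ i, g (s i) - ∫ x, g x ∂P|

section Hoeffding

variable {Ω : Type*} [MeasurableSpace Ω] (P : Measure Ω) [IsProbabilityMeasure P]
  {g : Ω → ℝ} {n : ℕ}

lemma measureReal_le_sum_sub_integral_le (hg : Measurable g) (hb : ∀ x, |g x| ≤ 1)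
    {ε : ℝ} (hε : 0 ≤ ε) :
    (Measure.pi fun _ : Fin n => P).real {s | ε ≤ ∑ i, (g (s i) - ∫ x, g x ∂P)}
      ≤ exp (-ε ^ 2 / (2 * n)) := by
  have hsub : HasSubgaussianMGF (fun x => g x - ∫ y, g y ∂P) 1 P := by
    have h2 : (‖(1:ℝ) - -1‖₊ / 2) ^ 2 = 1 := by norm_num [← NNReal.coe_inj]
    rw [← h2]
    exact hasSubgaussianMGF_of_mem_Icc hg.aemeasurable (ae_of_all _ fun x => abs_le.1 (hb x))
  have hcoord (i : Fin n) : HasSubgaussianMGF (fun s : Fin n → Ω => g (s i) - ∫ y, g y ∂P) 1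
      (Measure.pi fun _ => P) :=
    HasSubgaussianMGF.of_map (measurable_pi_apply i).aemeasurable
      (by rwa [(measurePreserving_eval (fun _ : Fin n => P) i).map_eq])
  simpa using HasSubgaussianMGF.measure_sum_ge_le_of_iIndepFun
    (iIndepFun_pi (μ := fun _ : Fin n => P) fun _ => (hg.sub_const (∫ y, g y ∂P)).aemeasurable)
    (s := Finset.univ) (c := fun _ => 1) (fun i _ => hcoord i) hε

lemma measure_lt_meanDeviation_le (hn : n ≠ 0) (hg : Measurable g)
    (hb : ∀ x, |g x| ≤ 1) {ε : ℝ} (hε : 0 ≤ ε) :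
    (Measure.pi fun _ : Fin n => P) {s | ε < meanDeviation P g s} ≤ ENNReal.ofReal (2 * exp (-(n * ε ^ 2) / 2)) := by
  have hn' : (0 : ℝ) < n := by positivity
  have htail : ∀ {h : Ω → ℝ}, Measurable h → (∀ x, |h x| ≤ 1) →
      (Measure.pi fun _ : Fin n => P) {s | n * ε ≤ ∑ i, (h (s i) - ∫ x, h x ∂P)}
        ≤ ENNReal.ofReal (exp (-(n * ε ^ 2) / 2)) := fun hh hhb => by
    rw [← ofReal_measureReal]
    refine ENNReal.ofReal_le_ofReal ((measureReal_le_sum_sub_integral_le P hh hhb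
      (by positivity)).trans_eq ?_)
    congr 1
    field_simp
  have hsplit : {s : Fin n → Ω | ε < meanDeviation P g s} ⊆
      {s | n * ε ≤ ∑ i, (g (s i) - ∫ x, g x ∂P)} ∪
        {s | n * ε ≤ ∑ i, (-g (s i) - ∫ x, -g x ∂P)} := by
    intro s hs
    simp only [meanDeviation, Set.mem_ofPred_eq, Set.mem_union, integral_neg, Finset.sum_sub_distrib,
      Finset.sum_neg_distrib, Finset.sum_const, Finset.card_univ, Fintype.card_fin,
      nsmul_eq_mul] at hs ⊢
    rcases lt_abs.1 hs with h | h <;> have := mul_lt_mul_of_pos_left h hn'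
    · left
      rw [mul_sub, mul_inv_cancel_left₀ hn'.ne'] at this
      linarith
    · right
      rw [neg_sub, mul_sub, mul_inv_cancel_left₀ hn'.ne'] at this
      linarith
  calc _ ≤ _ := measure_mono hsplit
    _ ≤ _ := measure_union_le _ _
    _ ≤ ENNReal.ofReal (exp (-(n * ε ^ 2) / 2)) + ENNReal.ofReal (exp (-(n * ε ^ 2) / 2)) :=
        add_le_add (htail hg hb) (htail hg.neg fun x => by simpa using hb x)
    _ = _ := by rw [← ENNReal.ofReal_add (by positivity) (by positivity), two_mul]

lemma measure_sqrt_lt_meanDeviation_le (hn : n ≠ 0) (hg : Measurable g)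
    (hb : ∀ x, |g x| ≤ 1) {L : ℝ} (hL : 0 ≤ L) :
    (Measure.pi fun _ : Fin n => P) {s | √(2 * L / n) < meanDeviation P g s}
      ≤ ENNReal.ofReal (2 * exp (-L)) := by
  refine (measure_lt_meanDeviation_le P hn hg hb (sqrt_nonneg _)).trans_eq ?_
  have hn' : (0 : ℝ) < n := by positivity
  rw [sq_sqrt (by positivity)]
  field_simp

end Hoeffding

section ProductEvents

variable {α β ι : Type*} [MeasurableSpace α] [MeasurableSpace β]

lemma ofReal_one_sub_le_of_measure_compl_le {μ : Measure α} [IsProbabilityMeasure μ]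
    {s : Set α} {δ : ℝ} (hδ : 0 ≤ δ) (h : μ sᶜ ≤ ENNReal.ofReal δ) :
    ENNReal.ofReal (1 - δ) ≤ μ s := by
  rw [ENNReal.ofReal_sub _ hδ, ENNReal.ofReal_one, tsub_le_iff_right]
  calc 1 = μ (s ∪ sᶜ) := by rw [Set.union_compl_self, measure_univ]
    _ ≤ μ s + μ sᶜ := measure_union_le _ _
    _ ≤ μ s + ENNReal.ofReal δ := by gcongr

lemma ofReal_one_sub_le_prod_of_forall_notMem (μ : Measure α) (ν : Measure β)
    [IsProbabilityMeasure μ] [IsProbabilityMeasure ν] (F : Finset ι) {A : ι → Set α}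
    {B : ι → Set β} {η₁ η₂ : ℝ} (hη₁ : 0 ≤ η₁) (hη₂ : 0 ≤ η₂)
    (hA : ∀ i ∈ F, μ (A i) ≤ ENNReal.ofReal η₁) (hB : ∀ i ∈ F, ν (B i) ≤ ENNReal.ofReal η₂)
    {T : Set (α × β)} (hT : ∀ s : α × β, (∀ i ∈ F, s.1 ∉ A i ∧ s.2 ∉ B i) → s ∈ T) :
    ENNReal.ofReal (1 - F.card * (η₁ + η₂)) ≤ μ.prod ν T := by
  refine ofReal_one_sub_le_of_measure_compl_le (by positivity) ?_
  have hcover : Tᶜ ⊆ ⋃ i ∈ F, Prod.fst ⁻¹' A i ∪ Prod.snd ⁻¹' B i := by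
    intro s hs
    contrapose! hs
    simp only [Set.mem_iUnion, Set.mem_union, Set.mem_preimage, not_exists, not_or] at hs
    exact Set.not_notMem.2 (hT s hs)
  calc μ.prod ν Tᶜ ≤ ∑ i ∈ F, μ.prod ν (Prod.fst ⁻¹' A i ∪ Prod.snd ⁻¹' B i) :=
        (measure_mono hcover).trans (measure_biUnion_finset_le F _)
    _ ≤ ∑ i ∈ F, ENNReal.ofReal (η₁ + η₂) := by
        refine Finset.sum_le_sum fun i hi => (measure_union_le _ _).trans ?_
        rw [← Set.prod_univ, ← Set.univ_prod, Measure.prod_prod, Measure.prod_prod,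
          measure_univ, measure_univ, mul_one, one_mul, ENNReal.ofReal_add hη₁ hη₂]
        exact add_le_add (hA i hi) (hB i hi)
    _ = ENNReal.ofReal (F.card * (η₁ + η₂)) := by
        rw [Finset.sum_const, nsmul_eq_mul, ENNReal.ofReal_mul (by positivity),
          ENNReal.ofReal_natCast]

end ProductEvents

section Mixture

variable {X : Type*} [MeasurableSpace X] {μ ν : Measure X} {p : ℝ}

lemma isProbabilityMeasure_mixture [IsProbabilityMeasure μ] [IsProbabilityMeasure ν]
    (hp : p ∈ Set.Icc (0 : ℝ) 1) :
    IsProbabilityMeasure (ENNReal.ofReal p • μ + ENNReal.ofReal (1 - p) • ν) := by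
  constructor
  simp only [Measure.add_apply, Measure.smul_apply, measure_univ, smul_eq_mul, mul_one]
  rw [← ENNReal.ofReal_add hp.1 (by linarith [hp.2]), add_sub_cancel, ENNReal.ofReal_one]

lemma integral_mixture {h : X → ℝ} (hμ : Integrable h μ) (hν : Integrable h ν)
    (hp : p ∈ Set.Icc (0 : ℝ) 1) :
    ∫ x, h x ∂(ENNReal.ofReal p • μ + ENNReal.ofReal (1 - p) • ν)
      = p * ∫ x, h x ∂μ + (1 - p) * ∫ x, h x ∂ν := by
  rw [integral_add_measure (hμ.smul_measure ENNReal.ofReal_ne_top)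
      (hν.smul_measure ENNReal.ofReal_ne_top), integral_smul_measure, integral_smul_measure,
    ENNReal.toReal_ofReal hp.1, ENNReal.toReal_ofReal (by linarith [hp.2]), smul_eq_mul,
    smul_eq_mul]

lemma moment_eq_integral_sub_integral_mixture {g f : X → ℝ} (hg : Integrable g μ)
    (hgfμ : Integrable (fun x => g x * f x) μ) (hgfν : Integrable (fun x => g x * f x) ν)
    (hp : p ∈ Set.Icc (0 : ℝ) 1) :
    p * ∫ x, g x * (1 - f x) ∂μ - (1 - p) * ∫ x, g x * f x ∂ν
      = p * ∫ x, g x ∂μ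
        - ∫ x, g x * f x ∂(ENNReal.ofReal p • μ + ENNReal.ofReal (1 - p) • ν) := by
  simp only [mul_one_sub]
  rw [integral_sub hg hgfμ, integral_mixture hgfμ hgfν hp]
  ring

end Mixture

lemma abs_sup'_sub_sup'_le {α : Type*} {F : Finset α} (hF : F.Nonempty) {u v : α → ℝ} {b : ℝ}
    (h : ∀ a ∈ F, |u a - v a| ≤ b) : |F.sup' hF u - F.sup' hF v| ≤ b := by
  rw [abs_sub_le_iff, sub_le_iff_le_add, sub_le_iff_le_add]
  constructor <;> refine Finset.sup'_le _ _ fun a ha => ?_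
  · linarith [(abs_sub_le_iff.1 (h a ha)).1, Finset.le_sup' v ha]
  · linarith [(abs_sub_le_iff.1 (h a ha)).2, Finset.le_sup' u ha]

section PU

variable {X : Type*} [MeasurableSpace X]

lemma integrable_of_abs_le_one {μ : Measure X} [IsFiniteMeasure μ] {g : X → ℝ}
    (hg : Measurable g) (hb : ∀ x, |g x| ≤ 1) : Integrable g μ :=
  .of_bound hg.aestronglyMeasurable 1 (ae_of_all _ hb)

lemma abs_mul_le_one_of_abs_le_one {a b : ℝ} (ha : |a| ≤ 1) (hb : |b| ≤ 1) : |a * b| ≤ 1 := by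
  rw [abs_mul]
  exact mul_le_one₀ ha (abs_nonneg _) hb

lemma abs_estimate_sub_moment_le {Pp Pm : Measure X} [IsProbabilityMeasure Pp]
    [IsProbabilityMeasure Pm] {p : ℝ} (hp : p ∈ Set.Icc (0 : ℝ) 1) {g f : X → ℝ}
    (hg : Measurable g) (hf : Measurable f) (hgb : ∀ x, |g x| ≤ 1) (hfb : ∀ x, |f x| ≤ 1)
    {np nu : ℕ} (a : Fin np → X) (b : Fin nu → X) {εp εu : ℝ}
    (ha : meanDeviation Pp g a ≤ εp)
    (hb : meanDeviation (ENNReal.ofReal p • Pp + ENNReal.ofReal (1 - p) • Pm)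
      (fun x => g x * f x) b ≤ εu) :
    |(p / np * ∑ i, g (a i) - 1 / nu * ∑ j, g (b j) * f (b j))
      - (p * ∫ x, g x * (1 - f x) ∂Pp - (1 - p) * ∫ x, g x * f x ∂Pm)| ≤ p * εp + εu := by
  unfold meanDeviation at ha hb
  have hgf : Measurable fun x => g x * f x := hg.mul hf
  have hgfb : ∀ x, |g x * f x| ≤ 1 := fun x => abs_mul_le_one_of_abs_le_one (hgb x) (hfb x)
  rw [moment_eq_integral_sub_integral_mixture (integrable_of_abs_le_one hg hgb)
    (integrable_of_abs_le_one hgf hgfb) (integrable_of_abs_le_one hgf hgfb) hp]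
  calc _ = |p * ((np : ℝ)⁻¹ * ∑ i, g (a i) - ∫ x, g x ∂Pp) - ((nu : ℝ)⁻¹ * ∑ j, g (b j) * f (b j)
        - ∫ x, g x * f x ∂(ENNReal.ofReal p • Pp + ENNReal.ofReal (1 - p) • Pm))| := by
        congr 1; ring
    _ ≤ p * |(np : ℝ)⁻¹ * ∑ i, g (a i) - ∫ x, g x ∂Pp| + |(nu : ℝ)⁻¹ * ∑ j, g (b j) * f (b j)
        - ∫ x, g x * f x ∂(ENNReal.ofReal p • Pp + ENNReal.ofReal (1 - p) • Pm)| := by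
        rw [← abs_of_nonneg hp.1, ← abs_mul, abs_of_nonneg hp.1]
        exact abs_sub _ _
    _ ≤ p * εp + εu := by gcongr; exact hp.1

end PU

/-- Finite-class uniform deviation of the empirical PU multicalibration
estimator: with probability at least `1 − δ` over PU samples, the corrected
empirical moments are uniformly close to the population moments `R_{c,w}(f)`,
and in particular the empirical and population multicalibration errors
(maxima of absolute moments) are close. -/
theorem pu_finite_class_uniform_deviation {X : Type*} [MeasurableSpace X]
    (Pp Pm : Measure X) [IsProbabilityMeasure Pp] [IsProbabilityMeasure Pm]
    (pip : ℝ) (hpi : pip ∈ Set.Icc (0:ℝ) 1)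
    (C : Finset (X → ℝ)) (W : Finset (ℝ → ℝ))
    (hCne : C.Nonempty) (hWne : W.Nonempty)
    (hC : ∀ c ∈ C, Measurable c ∧ ∀ x, c x ∈ Set.Icc (-1:ℝ) 1)
    (hW : ∀ w ∈ W, Measurable w ∧ ∀ v ∈ Set.Icc (0:ℝ) 1, w v ∈ Set.Icc (-1:ℝ) 1)
    (f : X → ℝ) (hf : Measurable f) (hf01 : ∀ x, f x ∈ Set.Icc (0:ℝ) 1)
    (np nu : ℕ) (hnp : 1 ≤ np) (hnu : 1 ≤ nu)
    (δ : ℝ) (hδ : δ ∈ Set.Ioo (0:ℝ) 1) :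
    ENNReal.ofReal (1 - δ) ≤
      ((Measure.pi fun _ : Fin np => Pp).prod
        (Measure.pi fun _ : Fin nu =>
          ENNReal.ofReal pip • Pp + ENNReal.ofReal (1 - pip) • Pm))
      {s : (Fin np → X) × (Fin nu → X) |
        (∀ c ∈ C, ∀ w ∈ W,
          |(pip / np * ∑ i, c (s.1 i) * w (f (s.1 i))
              - (1 / nu) * ∑ j, c (s.2 j) * w (f (s.2 j)) * f (s.2 j))
            - (pip * ∫ x, c x * w (f x) * (1 - f x) ∂Pp
              - (1 - pip) * ∫ x, c x * w (f x) * f x ∂Pm)|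
          ≤ pip * Real.sqrt (2 * Real.log (4 * (C.card : ℝ) * (W.card : ℝ) / δ) / np)
            + Real.sqrt (2 * Real.log (4 * (C.card : ℝ) * (W.card : ℝ) / δ) / nu))
        ∧
        |((C ×ˢ W).sup' (hCne.product hWne) fun p =>
            |pip / np * ∑ i, p.1 (s.1 i) * p.2 (f (s.1 i))
              - (1 / nu) * ∑ j, p.1 (s.2 j) * p.2 (f (s.2 j)) * f (s.2 j)|)
          - ((C ×ˢ W).sup' (hCne.product hWne) fun p =>
            |pip * ∫ x, p.1 x * p.2 (f x) * (1 - f x) ∂Pp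
              - (1 - pip) * ∫ x, p.1 x * p.2 (f x) * f x ∂Pm|)|
        ≤ pip * Real.sqrt (2 * Real.log (4 * (C.card : ℝ) * (W.card : ℝ) / δ) / np)
          + Real.sqrt (2 * Real.log (4 * (C.card : ℝ) * (W.card : ℝ) / δ) / nu) } := by
  have := isProbabilityMeasure_mixture (μ := Pp) (ν := Pm) hpi
  have hcard : (1 : ℝ) ≤ C.card * W.card := by
    exact_mod_cast Nat.one_le_iff_ne_zero.2 (Nat.mul_ne_zero hCne.card_ne_zero hWne.card_ne_zero)
  have hδ0 : 0 < δ := hδ.1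
  set L := log (4 * (C.card : ℝ) * (W.card : ℝ) / δ)
  have hL : 0 ≤ L := log_nonneg (by rw [le_div_iff₀ hδ0]; linarith [hδ.2])
  have hfb : ∀ x, |f x| ≤ 1 := fun x => abs_le.2 ⟨by linarith [(hf01 x).1], (hf01 x).2⟩
  have hpair : ∀ p ∈ C ×ˢ W, Measurable (fun x => p.1 x * p.2 (f x)) ∧
      ∀ x, |p.1 x * p.2 (f x)| ≤ 1 := fun p hp => by
    obtain ⟨hc, hw⟩ := Finset.mem_product.1 hp
    exact ⟨(hC _ hc).1.mul ((hW _ hw).1.comp hf), fun x => abs_mul_le_one_of_abs_le_one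
      (abs_le.2 ((hC _ hc).2 x)) (abs_le.2 ((hW _ hw).2 _ (hf01 x)))⟩
  refine (ofReal_one_sub_le_prod_of_forall_notMem _ _ (C ×ˢ W) (by positivity) (by positivity)
    (A := fun p => {a | √(2 * L / np) < meanDeviation Pp (fun x => p.1 x * p.2 (f x)) a})
    (B := fun p => {b | √(2 * L / nu) < meanDeviation _ (fun x => p.1 x * p.2 (f x) * f x) b})
    (fun p hp => measure_sqrt_lt_meanDeviation_le _ (by omega) (hpair p hp).1 (hpair p hp).2 hL)
    (fun p hp => measure_sqrt_lt_meanDeviation_le _ (by omega) ((hpair p hp).1.mul hf)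
      (fun x => abs_mul_le_one_of_abs_le_one ((hpair p hp).2 x) (hfb x)) hL)
    fun s hs => ?_).trans_eq' ?_
  · have hdev : ∀ p ∈ C ×ˢ W, _ := fun p hp => abs_estimate_sub_moment_le hpi (hpair p hp).1 hf
      (hpair p hp).2 hfb s.1 s.2 (not_lt.1 (hs p hp).1) (not_lt.1 (hs p hp).2)
    exact ⟨fun c hc w hw => hdev (c, w) (Finset.mem_product.2 ⟨hc, hw⟩),
      abs_sup'_sub_sup'_le _ fun p hp => (abs_abs_sub_abs_le_abs_sub _ _).trans (hdev p hp)⟩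
  · rw [Finset.card_product, exp_neg, exp_log (by positivity)]
    congr 1
    push_cast
    field_simp
    ring
end

section
/- (Finite-class uniform deviation of the UU multicalibration estimator.) Let γ₁, γ₂ ∈ [0,1] with Δ := 1 − γ₁ − γ₂ ≠ 0, P_{U₁} := (1−γ₁)·P₊ + γ₁·P₋, P_{U₂} := γ₂·P₊ + (1−γ₂)·P₋, α₁(v) := ((1−γ₂)·π₊·(1−v) + γ₂·π₋·v)/Δ, α₂(v) := (−γ₁·π₊·(1−v) − (1−γ₁)·π₋·v)/Δ, and A_k := sup_{v ∈ [0,1]} |α_k(v)| for k = 1,2. Let 𝒞 be a nonempty finite set of measurable functions c : 𝒳 → [−1,1], 𝒲 a nonempty finite set of measurable functions w : [0,1] → [−1,1], f : 𝒳 → [0,1] measurable, n₁, n₂ ≥ 1, δ ∈ (0,1). For s¹ ∈ 𝒳^{n₁}, s² ∈ 𝒳^{n₂} define Ĥ_{c,w}(s¹, s²) := Σ_{k=1}^{2} (1/n_k)·Σ_{i=1}^{n_k} α_k(f(s^k_i))·c(s^k_i)·w(f(s^k_i)). Then under the product measure P_{U₁}^{⊗ n₁} ⊗ P_{U₂}^{⊗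 n₂}, with probability at least 1 − δ, max_{c ∈ 𝒞, w ∈ 𝒲} |Ĥ_{c,w}(s¹, s²) − R_{c,w}(f)| ≤ A₁·√(2·log(4·|𝒞|·|𝒲|/δ)/n₁) + A₂·√(2·log(4·|𝒞|·|𝒲|/δ)/n₂). -/
/-!
The weights `uuWeight₁`, `uuWeight₂` (the paper's `α₁`, `α₂`) undo the mixing of the two
unlabeled distributions: `(1 - γ₁) α₁ + γ₂ α₂ = π₊ (1 - v)` and `γ₁ α₁ + (1 - γ₂) α₂ = -π₋ v`,
so the estimator is unbiased for `R_{c,w}(f)`. Each of its two empirical means averages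
i.i.d. terms bounded by `A_k`, so by Hoeffding's inequality it deviates by more than
`A_k √(2L / n_k)` with probability at most `2 e^{-L}`. A union bound over the `2 |𝒞| |𝒲|`
empirical means with `L = log (4 |𝒞| |𝒲| / δ)` leaves failure probability `δ`.
-/

open Real MeasureTheory ProbabilityTheory

section Hoeffding

variable {Ω : Type*} [MeasurableSpace Ω] (μ : Measure Ω) [IsProbabilityMeasure μ]
  {g : Ω → ℝ} {A : ℝ}

theorem measureReal_pi_le_sum_sub_integral_le (hg : Measurable g) (hgA : ∀ x, |g x| ≤ A)
    (n : ℕ) {ε : ℝ} (hε : 0 ≤ ε) :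
    (Measure.pi fun _ : Fin n => μ).real {s | ε ≤ ∑ i, (g (s i) - ∫ x, g x ∂μ)}
      ≤ exp (-ε ^ 2 / (2 * n * A ^ 2)) := by
  have hsubG : HasSubgaussianMGF (fun x => g x - μ[g]) ((‖A - -A‖₊ / 2) ^ 2) μ :=
    hasSubgaussianMGF_of_mem_Icc hg.aemeasurable (ae_of_all _ fun x => abs_le.1 (hgA x))
  have hcoord (i : Fin n) : HasSubgaussianMGF (fun s : Fin n → Ω => g (s i) - μ[g])
      ((‖A - -A‖₊ / 2) ^ 2) (Measure.pi fun _ => μ) :=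
    HasSubgaussianMGF.of_map (measurable_pi_apply i).aemeasurable
      (by rwa [(measurePreserving_eval (fun _ => μ) i).map_eq])
  have h := HasSubgaussianMGF.measure_sum_ge_le_of_iIndepFun
    (iIndepFun_pi (μ := fun _ : Fin n => μ) (X := fun _ x => g x - μ[g])
      fun _ => (hg.sub_const _).aemeasurable) (s := Finset.univ) (fun i _ => hcoord i) hε
  refine h.trans_eq ?_
  have hc : ((‖A - -A‖₊ / 2) ^ 2 : NNReal) = A ^ 2 := by
    rw [sub_neg_eq_add, ← two_mul]; simp
  rw [NNReal.coe_sum, Finset.sum_const, Finset.card_univ, Fintype.card_fin, nsmul_eq_mul, hc,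
    mul_assoc]

theorem measureReal_pi_lt_abs_mean_sub_integral_le (hg : Measurable g) (hgA : ∀ x, |g x| ≤ A)
    {n : ℕ} (hn : 0 < n) {t : ℝ} (ht : 0 ≤ t) :
    (Measure.pi fun _ : Fin n => μ).real {s | t < |1 / n * ∑ i, g (s i) - ∫ x, g x ∂μ|}
      ≤ 2 * exp (-n * t ^ 2 / (2 * A ^ 2)) := by
  have hn' : (0 : ℝ) < n := Nat.cast_pos.2 hn
  have hmean (s : Fin n → Ω) :
      1 / n * ∑ i, g (s i) - ∫ x, g x ∂μ = (∑ i, (g (s i) - ∫ x, g x ∂μ)) / n := by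
    rw [Finset.sum_sub_distrib, Finset.sum_const, Finset.card_univ, Fintype.card_fin,
      nsmul_eq_mul]
    field_simp
  have hsub : {s : Fin n → Ω | t < |1 / n * ∑ i, g (s i) - ∫ x, g x ∂μ|}
      ⊆ {s | n * t ≤ ∑ i, (g (s i) - ∫ x, g x ∂μ)}
        ∪ {s | n * t ≤ ∑ i, (-g (s i) - ∫ x, -g x ∂μ)} := by
    intro s hs
    have hneg : ∑ i, (-g (s i) - ∫ x, -g x ∂μ) = -∑ i, (g (s i) - ∫ x, g x ∂μ) := by
      simp only [integral_neg, ← Finset.sum_neg_distrib, neg_sub, sub_neg_eq_add, neg_add_eq_sub]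
    simp only [Set.mem_ofPred_eq, hmean, lt_abs, ← neg_div, lt_div_iff₀ hn'] at hs
    simp only [Set.mem_union, Set.mem_ofPred_eq, hneg]
    rcases hs with hs | hs
    · exact Or.inl (by linarith)
    · exact Or.inr (by linarith)
  have hexp : -(n * t) ^ 2 / (2 * n * A ^ 2) = -n * t ^ 2 / (2 * A ^ 2) := by
    field_simp
  calc _ ≤ _ := measureReal_mono hsub
    _ ≤ _ := measureReal_union_le _ _
    _ ≤ exp (-(n * t) ^ 2 / (2 * n * A ^ 2)) + exp (-(n * t) ^ 2 / (2 * n * A ^ 2)) :=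
      add_le_add (measureReal_pi_le_sum_sub_integral_le μ hg hgA n (by positivity))
        (measureReal_pi_le_sum_sub_integral_le μ hg.neg
          (fun x => (abs_neg (g x)).trans_le (hgA x)) n (by positivity))
    _ = _ := by rw [hexp]; ring

theorem measureReal_pi_lt_abs_mean_sub_integral_le_two_mul_exp (hg : Measurable g)
    (hA : 0 ≤ A) (hgA : ∀ x, |g x| ≤ A) {n : ℕ} (hn : 0 < n) {L : ℝ} (hL : 0 ≤ L) :
    (Measure.pi fun _ : Fin n => μ).real
        {s | A * √(2 * L / n) < |1 / n * ∑ i, g (s i) - ∫ x, g x ∂μ|} ≤ 2 * exp (-L) := by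
  -- At `A = 0` Hoeffding's exponent divides by zero; there `g` vanishes and the event is empty.
  rcases hA.eq_or_lt with rfl | hA
  · have hg0 (x : Ω) : g x = 0 := abs_nonpos_iff.1 (hgA x)
    simpa [hg0] using (exp_pos (-L)).le
  · refine (measureReal_pi_lt_abs_mean_sub_integral_le μ hg hgA hn (by positivity)).trans_eq ?_
    rw [mul_pow, sq_sqrt (by positivity)]
    field_simp

end Hoeffding

section UnionBound

variable {α β ι : Type*} [MeasurableSpace α] [MeasurableSpace β]

theorem one_sub_measureReal_compl_le (μ : Measure α) [IsProbabilityMeasure μ] (s : Set α) :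
    1 - μ.real sᶜ ≤ μ.real s := by
  have h := measureReal_union_le (μ := μ) s sᶜ
  rw [Set.union_compl_self, probReal_univ] at h
  linarith

theorem one_sub_le_measureReal_prod_forall_mem (μ : Measure α) (ν : Measure β)
    [IsProbabilityMeasure μ] [IsProbabilityMeasure ν] (S : Finset ι) (E : ι → Set α)
    (F : ι → Set β) {a b : ℝ} (hE : ∀ i ∈ S, μ.real (E i)ᶜ ≤ a)
    (hF : ∀ i ∈ S, ν.real (F i)ᶜ ≤ b) :
    1 - S.card * (a + b) ≤ (μ.prod ν).real {p | ∀ i ∈ S, p.1 ∈ E i ∧ p.2 ∈ F i} := by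
  have hcompl : {p : α × β | ∀ i ∈ S, p.1 ∈ E i ∧ p.2 ∈ F i}ᶜ
      = ⋃ i ∈ S, ((E i)ᶜ ×ˢ Set.univ ∪ Set.univ ×ˢ (F i)ᶜ) := by
    ext p
    simp [imp_iff_not_or]
  have hbad : (μ.prod ν).real {p : α × β | ∀ i ∈ S, p.1 ∈ E i ∧ p.2 ∈ F i}ᶜ
      ≤ S.card * (a + b) := by
    rw [hcompl]
    calc _ ≤ ∑ i ∈ S, (μ.prod ν).real ((E i)ᶜ ×ˢ Set.univ ∪ Set.univ ×ˢ (F i)ᶜ) :=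
          measureReal_biUnion_finset_le _ _
      _ ≤ ∑ i ∈ S, (a + b) := Finset.sum_le_sum fun i hi => (measureReal_union_le _ _).trans
          (by simpa [measureReal_prod_prod] using add_le_add (hE i hi) (hF i hi))
      _ = _ := by rw [Finset.sum_const, nsmul_eq_mul]
  linarith [one_sub_measureReal_compl_le (μ.prod ν) {p : α × β | ∀ i ∈ S, p.1 ∈ E i ∧ p.2 ∈ F i}]

end UnionBound

theorem one_sub_le_measureReal_forall_abs_two_sample_mean_sub_le {X ι : Type*}
    [MeasurableSpace X] (μ₁ μ₂ : Measure X) [IsProbabilityMeasure μ₁] [IsProbabilityMeasure μ₂]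
    (S : Finset ι) {g₁ g₂ : ι → X → ℝ} (hg₁ : ∀ i ∈ S, Measurable (g₁ i))
    (hg₂ : ∀ i ∈ S, Measurable (g₂ i)) {A₁ A₂ : ℝ} (hA₁ : 0 ≤ A₁) (hA₂ : 0 ≤ A₂)
    (hg₁A : ∀ i ∈ S, ∀ x, |g₁ i x| ≤ A₁) (hg₂A : ∀ i ∈ S, ∀ x, |g₂ i x| ≤ A₂)
    {n₁ n₂ : ℕ} (hn₁ : 0 < n₁) (hn₂ : 0 < n₂) {L : ℝ} (hL : 0 ≤ L) :
    1 - S.card * (4 * exp (-L)) ≤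
      ((Measure.pi fun _ : Fin n₁ => μ₁).prod (Measure.pi fun _ : Fin n₂ => μ₂)).real
        {s | ∀ i ∈ S, |(1 / n₁ * ∑ j, g₁ i (s.1 j) + 1 / n₂ * ∑ j, g₂ i (s.2 j))
            - (∫ x, g₁ i x ∂μ₁ + ∫ x, g₂ i x ∂μ₂)|
          ≤ A₁ * √(2 * L / n₁) + A₂ * √(2 * L / n₂)} := by
  have hbound : 4 * exp (-L) = 2 * exp (-L) + 2 * exp (-L) := by ring
  rw [hbound]
  refine (one_sub_le_measureReal_prod_forall_mem _ _ S
    (fun i => {u | |1 / n₁ * ∑ j, g₁ i (u j) - ∫ x, g₁ i x ∂μ₁| ≤ A₁ * √(2 * L / n₁)})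
    (fun i => {u | |1 / n₂ * ∑ j, g₂ i (u j) - ∫ x, g₂ i x ∂μ₂| ≤ A₂ * √(2 * L / n₂)})
    (fun i hi => ?_) (fun i hi => ?_)).trans (measureReal_mono ?_)
  · simpa only [Set.compl_ofPred, not_le] using
      measureReal_pi_lt_abs_mean_sub_integral_le_two_mul_exp μ₁ (hg₁ i hi) hA₁ (hg₁A i hi) hn₁ hL
  · simpa only [Set.compl_ofPred, not_le] using
      measureReal_pi_lt_abs_mean_sub_integral_le_two_mul_exp μ₂ (hg₂ i hi) hA₂ (hg₂A i hi) hn₂ hL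
  · intro s hs i hi
    obtain ⟨h₁, h₂⟩ := hs i hi
    rw [add_sub_add_comm]
    exact (abs_add_le _ _).trans (add_le_add h₁ h₂)

section Mixture

variable {X : Type*} [MeasurableSpace X]

theorem isProbabilityMeasure_ofReal_smul_add_ofReal_smul (P Q : Measure X)
    [IsProbabilityMeasure P] [IsProbabilityMeasure Q] {a b : ℝ} (ha : 0 ≤ a) (hb : 0 ≤ b)
    (hab : a + b = 1) : IsProbabilityMeasure (ENNReal.ofReal a • P + ENNReal.ofReal b • Q) :=
  ⟨by simp [← ENNReal.ofReal_add ha hb, hab]⟩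

theorem integral_ofReal_smul_add_ofReal_smul {P Q : Measure X} {a b : ℝ} (ha : 0 ≤ a)
    (hb : 0 ≤ b) {g : X → ℝ} (hgP : Integrable g P) (hgQ : Integrable g Q) :
    ∫ x, g x ∂(ENNReal.ofReal a • P + ENNReal.ofReal b • Q)
      = a * ∫ x, g x ∂P + b * ∫ x, g x ∂Q := by
  rw [integral_add_measure (hgP.smul_measure ENNReal.ofReal_ne_top)
      (hgQ.smul_measure ENNReal.ofReal_ne_top), integral_smul_measure, integral_smul_measure,
    ENNReal.toReal_ofReal ha, ENNReal.toReal_ofReal hb, smul_eq_mul, smul_eq_mul]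

end Mixture

theorem MeasureTheory.Integrable.continuous_comp_mul {X : Type*} [MeasurableSpace X]
    {μ : Measure X} {h : X → ℝ} (hh : Integrable h μ) {φ : ℝ → ℝ} (hφ : Continuous φ)
    {K : Set ℝ} (hK : IsCompact K) {f : X → ℝ} (hf : Measurable f) (hfK : ∀ x, f x ∈ K) :
    Integrable (fun x => φ (f x) * h x) μ := by
  obtain ⟨B, hB⟩ := hK.exists_bound_of_continuousOn hφ.continuousOn
  exact hh.bdd_mul (hφ.measurable.comp hf).aestronglyMeasurable
    (ae_of_all _ fun x => hB _ (hfK x))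

theorem abs_le_sSup_image_abs {K : Set ℝ} (hK : IsCompact K) {φ : ℝ → ℝ} (hφ : Continuous φ)
    {v : ℝ} (hv : v ∈ K) : |φ v| ≤ sSup ((fun v => |φ v|) '' K) :=
  le_csSup (hK.image (continuous_abs.comp hφ)).bddAbove (Set.mem_image_of_mem _ hv)

section UUWeights

variable (pip γ₁ γ₂ : ℝ)

noncomputable def uuWeight₁ (v : ℝ) : ℝ :=
  ((1 - γ₂) * pip * (1 - v) + γ₂ * (1 - pip) * v) / (1 - γ₁ - γ₂)

noncomputable def uuWeight₂ (v : ℝ) : ℝ :=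
  (-(γ₁ * pip * (1 - v)) - (1 - γ₁) * (1 - pip) * v) / (1 - γ₁ - γ₂)

theorem continuous_uuWeight₁ : Continuous (uuWeight₁ pip γ₁ γ₂) := by
  unfold uuWeight₁; fun_prop

theorem continuous_uuWeight₂ : Continuous (uuWeight₂ pip γ₁ γ₂) := by
  unfold uuWeight₂; fun_prop

variable {pip γ₁ γ₂}

theorem uuWeight_combination_pos (hΔ : 1 - γ₁ - γ₂ ≠ 0) (v : ℝ) :
    (1 - γ₁) * uuWeight₁ pip γ₁ γ₂ v + γ₂ * uuWeight₂ pip γ₁ γ₂ v = pip * (1 - v) := by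
  unfold uuWeight₁ uuWeight₂; field_simp; ring

theorem uuWeight_combination_neg (hΔ : 1 - γ₁ - γ₂ ≠ 0) (v : ℝ) :
    γ₁ * uuWeight₁ pip γ₁ γ₂ v + (1 - γ₂) * uuWeight₂ pip γ₁ γ₂ v = -((1 - pip) * v) := by
  unfold uuWeight₁ uuWeight₂; field_simp; ring

end UUWeights

theorem integral_uuWeight₁_mul_add_integral_uuWeight₂_mul {X : Type*} [MeasurableSpace X]
    (P Q : Measure X) {pip γ₁ γ₂ : ℝ} (hγ₁ : γ₁ ∈ Set.Icc (0 : ℝ) 1)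
    (hγ₂ : γ₂ ∈ Set.Icc (0 : ℝ) 1) (hΔ : 1 - γ₁ - γ₂ ≠ 0) {f h : X → ℝ} (hf : Measurable f)
    (hf01 : ∀ x, f x ∈ Set.Icc (0 : ℝ) 1) (hhP : Integrable h P) (hhQ : Integrable h Q) :
    ∫ x, uuWeight₁ pip γ₁ γ₂ (f x) * h x
        ∂(ENNReal.ofReal (1 - γ₁) • P + ENNReal.ofReal γ₁ • Q)
      + ∫ x, uuWeight₂ pip γ₁ γ₂ (f x) * h x
        ∂(ENNReal.ofReal γ₂ • P + ENNReal.ofReal (1 - γ₂) • Q)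
      = pip * ∫ x, h x * (1 - f x) ∂P - (1 - pip) * ∫ x, h x * f x ∂Q := by
  have hint₁ {μ : Measure X} (hh : Integrable h μ) :=
    hh.continuous_comp_mul (continuous_uuWeight₁ pip γ₁ γ₂) isCompact_Icc hf hf01
  have hint₂ {μ : Measure X} (hh : Integrable h μ) :=
    hh.continuous_comp_mul (continuous_uuWeight₂ pip γ₁ γ₂) isCompact_Icc hf hf01
  rw [integral_ofReal_smul_add_ofReal_smul (sub_nonneg.2 hγ₁.2) hγ₁.1 (hint₁ hhP) (hint₁ hhQ),
    integral_ofReal_smul_add_ofReal_smul hγ₂.1 (sub_nonneg.2 hγ₂.2) (hint₂ hhP) (hint₂ hhQ)]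
  have hP : (1 - γ₁) * ∫ x, uuWeight₁ pip γ₁ γ₂ (f x) * h x ∂P
      + γ₂ * ∫ x, uuWeight₂ pip γ₁ γ₂ (f x) * h x ∂P = pip * ∫ x, h x * (1 - f x) ∂P := by
    rw [← integral_const_mul, ← integral_const_mul, ← integral_add ((hint₁ hhP).const_mul _)
      ((hint₂ hhP).const_mul _), ← integral_const_mul]
    congr 1 with x
    linear_combination h x * uuWeight_combination_pos (pip := pip) hΔ (f x)
  have hQ : γ₁ * ∫ x, uuWeight₁ pip γ₁ γ₂ (f x) * h x ∂Q
      + (1 - γ₂) * ∫ x, uuWeight₂ pip γ₁ γ₂ (f x) * h x ∂Q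
        = -((1 - pip) * ∫ x, h x * f x ∂Q) := by
    rw [← integral_const_mul, ← integral_const_mul, ← integral_add ((hint₁ hhQ).const_mul _)
      ((hint₂ hhQ).const_mul _), ← integral_const_mul, ← integral_neg]
    congr 1 with x
    linear_combination h x * uuWeight_combination_neg (pip := pip) hΔ (f x)
  linarith

theorem ofReal_one_sub_le_measure_forall_abs_uuEstimator_sub_le {X ι : Type*}
    [MeasurableSpace X] (P Q : Measure X) [IsProbabilityMeasure P] [IsProbabilityMeasure Q]
    {pip γ₁ γ₂ : ℝ} (hγ₁ : γ₁ ∈ Set.Icc (0 : ℝ) 1) (hγ₂ : γ₂ ∈ Set.Icc (0 : ℝ) 1)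
    (hΔ : 1 - γ₁ - γ₂ ≠ 0) {f : X → ℝ} (hf : Measurable f) (hf01 : ∀ x, f x ∈ Set.Icc (0 : ℝ) 1)
    (S : Finset ι) {h : ι → X → ℝ} (hh : ∀ i ∈ S, Measurable (h i))
    (hh1 : ∀ i ∈ S, ∀ x, |h i x| ≤ 1) {n₁ n₂ : ℕ} (hn₁ : 0 < n₁) (hn₂ : 0 < n₂) {L : ℝ}
    (hL : 0 ≤ L) :
    ENNReal.ofReal (1 - S.card * (4 * exp (-L))) ≤
      (Measure.pi fun _ : Fin n₁ => ENNReal.ofReal (1 - γ₁) • P + ENNReal.ofReal γ₁ • Q).prod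
        (Measure.pi fun _ : Fin n₂ => ENNReal.ofReal γ₂ • P + ENNReal.ofReal (1 - γ₂) • Q)
        {s | ∀ i ∈ S, |(1 / n₁ * ∑ j, uuWeight₁ pip γ₁ γ₂ (f (s.1 j)) * h i (s.1 j)
              + 1 / n₂ * ∑ j, uuWeight₂ pip γ₁ γ₂ (f (s.2 j)) * h i (s.2 j))
            - (pip * ∫ x, h i x * (1 - f x) ∂P - (1 - pip) * ∫ x, h i x * f x ∂Q)|
          ≤ sSup ((fun v => |uuWeight₁ pip γ₁ γ₂ v|) '' Set.Icc 0 1) * √(2 * L / n₁)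
            + sSup ((fun v => |uuWeight₂ pip γ₁ γ₂ v|) '' Set.Icc 0 1) * √(2 * L / n₂)} := by
  have := isProbabilityMeasure_ofReal_smul_add_ofReal_smul P Q (a := 1 - γ₁) (b := γ₁)
    (sub_nonneg.2 hγ₁.2) hγ₁.1 (by ring)
  have := isProbabilityMeasure_ofReal_smul_add_ofReal_smul P Q (a := γ₂) (b := 1 - γ₂)
    hγ₂.1 (sub_nonneg.2 hγ₂.2) (by ring)
  have hweighted {φ : ℝ → ℝ} (hφ : Continuous φ) {i : ι} (hi : i ∈ S) :
      Measurable (fun x => φ (f x) * h i x) ∧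
        ∀ x, |φ (f x) * h i x| ≤ sSup ((fun v => |φ v|) '' Set.Icc 0 1) := by
    refine ⟨(hφ.measurable.comp hf).mul (hh i hi), fun x => ?_⟩
    rw [abs_mul]
    exact (mul_le_of_le_one_right (abs_nonneg _) (hh1 i hi x)).trans
      (abs_le_sSup_image_abs isCompact_Icc hφ (hf01 x))
  have hsup_nonneg {φ : ℝ → ℝ} (hφ : Continuous φ) :
      0 ≤ sSup ((fun v => |φ v|) '' Set.Icc 0 1) :=
    (abs_nonneg _).trans (abs_le_sSup_image_abs isCompact_Icc hφ (Set.left_mem_Icc.2 zero_le_one))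
  have hint {μ : Measure X} [IsFiniteMeasure μ] {i : ι} (hi : i ∈ S) : Integrable (h i) μ :=
    .of_bound (hh i hi).aestronglyMeasurable 1 (ae_of_all _ (hh1 i hi))
  have hφ₁ := continuous_uuWeight₁ pip γ₁ γ₂
  have hφ₂ := continuous_uuWeight₂ pip γ₁ γ₂
  rw [ENNReal.ofReal_le_iff_le_toReal (measure_ne_top _ _), ← measureReal_def]
  refine (one_sub_le_measureReal_forall_abs_two_sample_mean_sub_le
    (ENNReal.ofReal (1 - γ₁) • P + ENNReal.ofReal γ₁ • Q)
    (ENNReal.ofReal γ₂ • P + ENNReal.ofReal (1 - γ₂) • Q) S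
    (fun i hi => (hweighted hφ₁ hi).1) (fun i hi => (hweighted hφ₂ hi).1)
    (hsup_nonneg hφ₁) (hsup_nonneg hφ₂) (fun i hi => (hweighted hφ₁ hi).2)
    (fun i hi => (hweighted hφ₂ hi).2) hn₁ hn₂ hL).trans_eq ?_
  congr 1
  ext s
  refine forall₂_congr fun i hi => ?_
  rw [integral_uuWeight₁_mul_add_integral_uuWeight₂_mul P Q hγ₁ hγ₂ hΔ hf hf01
    (hint hi) (hint hi)]

theorem uu_finite_class_uniform_deviation_general {X : Type*} [MeasurableSpace X]
    (Pp Pm : Measure X) [IsProbabilityMeasure Pp] [IsProbabilityMeasure Pm]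
    (pip : ℝ)
    (γ1 γ2 : ℝ) (hγ1 : γ1 ∈ Set.Icc (0:ℝ) 1) (hγ2 : γ2 ∈ Set.Icc (0:ℝ) 1)
    (hΔ : 1 - γ1 - γ2 ≠ 0)
    (C : Finset (X → ℝ)) (W : Finset (ℝ → ℝ))
    (hCne : C.Nonempty) (hWne : W.Nonempty)
    (hC : ∀ c ∈ C, Measurable c ∧ ∀ x, c x ∈ Set.Icc (-1:ℝ) 1)
    (hW : ∀ w ∈ W, Measurable w ∧ ∀ v ∈ Set.Icc (0:ℝ) 1, w v ∈ Set.Icc (-1:ℝ) 1)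
    (f : X → ℝ) (hf : Measurable f) (hf01 : ∀ x, f x ∈ Set.Icc (0:ℝ) 1)
    (n1 n2 : ℕ) (hn1 : 1 ≤ n1) (hn2 : 1 ≤ n2)
    (δ : ℝ) (hδ : δ ∈ Set.Ioo (0:ℝ) 1) :
    ENNReal.ofReal (1 - δ) ≤
      ((Measure.pi fun _ : Fin n1 =>
          ENNReal.ofReal (1 - γ1) • Pp + ENNReal.ofReal γ1 • Pm).prod
        (Measure.pi fun _ : Fin n2 =>
          ENNReal.ofReal γ2 • Pp + ENNReal.ofReal (1 - γ2) • Pm))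
      {s : (Fin n1 → X) × (Fin n2 → X) |
        ∀ c ∈ C, ∀ w ∈ W,
          |((1 / n1 * ∑ i, ((1 - γ2) * pip * (1 - f (s.1 i)) + γ2 * (1 - pip) * f (s.1 i))
                / (1 - γ1 - γ2) * (c (s.1 i) * w (f (s.1 i))))
            + 1 / n2 * ∑ j, (-(γ1 * pip * (1 - f (s.2 j))) - (1 - γ1) * (1 - pip) * f (s.2 j))
                / (1 - γ1 - γ2) * (c (s.2 j) * w (f (s.2 j))))
            - (pip * ∫ x, c x * w (f x) * (1 - f x) ∂Pp
              - (1 - pip) * ∫ x, c x * w (f x) * f x ∂Pm)|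
          ≤ (sSup ((fun v : ℝ =>
                |((1 - γ2) * pip * (1 - v) + γ2 * (1 - pip) * v) / (1 - γ1 - γ2)|)
                  '' Set.Icc (0:ℝ) 1))
              * Real.sqrt (2 * Real.log (4 * (C.card : ℝ) * (W.card : ℝ) / δ) / n1)
            + (sSup ((fun v : ℝ =>
                |(-(γ1 * pip * (1 - v)) - (1 - γ1) * (1 - pip) * v) / (1 - γ1 - γ2)|)
                  '' Set.Icc (0:ℝ) 1))
              * Real.sqrt (2 * Real.log (4 * (C.card : ℝ) * (W.card : ℝ) / δ) / n2) } := by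
  obtain ⟨hδ0, hδ1⟩ := hδ
  have hN : (1 : ℝ) ≤ C.card * W.card := by
    exact_mod_cast Nat.one_le_iff_ne_zero.2 (Nat.mul_ne_zero hCne.card_pos.ne' hWne.card_pos.ne')
  have hL : 0 ≤ log (4 * C.card * W.card / δ) :=
    log_nonneg (by rw [le_div_iff₀ hδ0]; nlinarith)
  have hfailure : ((C ×ˢ W).card : ℝ) * (4 * exp (-log (4 * C.card * W.card / δ))) = δ := by
    rw [Finset.card_product, exp_neg, exp_log (by positivity)]
    push_cast
    field_simp
  have hclass {cw : (X → ℝ) × (ℝ → ℝ)} (hcw : cw ∈ C ×ˢ W) :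
      Measurable (fun x => cw.1 x * cw.2 (f x)) ∧ ∀ x, |cw.1 x * cw.2 (f x)| ≤ 1 := by
    obtain ⟨hc, hw⟩ := Finset.mem_product.1 hcw
    refine ⟨(hC _ hc).1.mul ((hW _ hw).1.comp hf), fun x => ?_⟩
    rw [abs_mul]
    exact mul_le_one₀ (abs_le.2 ((hC _ hc).2 x)) (abs_nonneg _) (abs_le.2 ((hW _ hw).2 _ (hf01 x)))
  have key := ofReal_one_sub_le_measure_forall_abs_uuEstimator_sub_le Pp Pm (pip := pip)
    hγ1 hγ2 hΔ hf hf01 (C ×ˢ W) (fun _ hcw => (hclass hcw).1) (fun _ hcw => (hclass hcw).2)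
    hn1 hn2 hL
  calc ENNReal.ofReal (1 - δ) = _ := by rw [hfailure]
    _ ≤ _ := key
    _ ≤ _ := measure_mono fun s hs c hc w hw => hs (c, w) (Finset.mk_mem_product hc hw)

/-- Finite-class uniform deviation of the empirical UU multicalibration
estimator: with probability at least `1 − δ` over the two unlabeled samples,
the corrected empirical moments are uniformly close to the population
moments `R_{c,w}(f)`. -/
theorem uu_finite_class_uniform_deviation {X : Type*} [MeasurableSpace X]
    (Pp Pm : Measure X) [IsProbabilityMeasure Pp] [IsProbabilityMeasure Pm]
    (pip : ℝ) (hpi : pip ∈ Set.Icc (0:ℝ) 1)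
    (γ1 γ2 : ℝ) (hγ1 : γ1 ∈ Set.Icc (0:ℝ) 1) (hγ2 : γ2 ∈ Set.Icc (0:ℝ) 1)
    (hΔ : 1 - γ1 - γ2 ≠ 0)
    (C : Finset (X → ℝ)) (W : Finset (ℝ → ℝ))
    (hCne : C.Nonempty) (hWne : W.Nonempty)
    (hC : ∀ c ∈ C, Measurable c ∧ ∀ x, c x ∈ Set.Icc (-1:ℝ) 1)
    (hW : ∀ w ∈ W, Measurable w ∧ ∀ v ∈ Set.Icc (0:ℝ) 1, w v ∈ Set.Icc (-1:ℝ) 1)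
    (f : X → ℝ) (hf : Measurable f) (hf01 : ∀ x, f x ∈ Set.Icc (0:ℝ) 1)
    (n1 n2 : ℕ) (hn1 : 1 ≤ n1) (hn2 : 1 ≤ n2)
    (δ : ℝ) (hδ : δ ∈ Set.Ioo (0:ℝ) 1) :
    ENNReal.ofReal (1 - δ) ≤
      ((Measure.pi fun _ : Fin n1 =>
          ENNReal.ofReal (1 - γ1) • Pp + ENNReal.ofReal γ1 • Pm).prod
        (Measure.pi fun _ : Fin n2 =>
          ENNReal.ofReal γ2 • Pp + ENNReal.ofReal (1 - γ2) • Pm))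
      {s : (Fin n1 → X) × (Fin n2 → X) |
        ∀ c ∈ C, ∀ w ∈ W,
          |((1 / n1 * ∑ i, ((1 - γ2) * pip * (1 - f (s.1 i)) + γ2 * (1 - pip) * f (s.1 i))
                / (1 - γ1 - γ2) * (c (s.1 i) * w (f (s.1 i))))
            + 1 / n2 * ∑ j, (-(γ1 * pip * (1 - f (s.2 j))) - (1 - γ1) * (1 - pip) * f (s.2 j))
                / (1 - γ1 - γ2) * (c (s.2 j) * w (f (s.2 j))))
            - (pip * ∫ x, c x * w (f x) * (1 - f x) ∂Pp
              - (1 - pip) * ∫ x, c x * w (f x) * f x ∂Pm)|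
          ≤ (sSup ((fun v : ℝ =>
                |((1 - γ2) * pip * (1 - v) + γ2 * (1 - pip) * v) / (1 - γ1 - γ2)|)
                  '' Set.Icc (0:ℝ) 1))
              * Real.sqrt (2 * Real.log (4 * (C.card : ℝ) * (W.card : ℝ) / δ) / n1)
            + (sSup ((fun v : ℝ =>
                |(-(γ1 * pip * (1 - v)) - (1 - γ1) * (1 - pip) * v) / (1 - γ1 - γ2)|)
                  '' Set.Icc (0:ℝ) 1))
              * Real.sqrt (2 * Real.log (4 * (C.card : ℝ) * (W.card : ℝ) / δ) / n2) } :=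
  uu_finite_class_uniform_deviation_general Pp Pm pip γ1 γ2 hγ1 hγ2 hΔ C W hCne hWne hC hW f hf hf01
    n1 n2 hn1 hn2 δ hδ
end

section
/- (Finite-union maximal inequality for Rademacher averages.) Let m ≥ 1, let σ₁, …, σ_m be independent random variables each uniform on {−1, +1}, let x₁, …, x_m be fixed points of a set 𝒳, let λ ≥ 0, and let F₁, …, F_M (M ≥ 1) be nonempty finite sets of functions h : 𝒳 → ℝ such that |h(x_i)| ≤ λ for every h ∈ F₁ ∪ ⋯ ∪ F_M and every i ≤ m. Then E[max_{1 ≤ ℓ ≤ M} max_{h ∈ F_ℓ} (1/m)·Σ_{i=1}^{m} σ_i·h(x_i)] ≤ max_{1 ≤ ℓ ≤ M} E[max_{h ∈ F_ℓ} (1/m)·Σ_{i=1}^{m} σ_i·h(x_i)] + λ·√(2·log M / m). -/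
/-!
Write `Z_ℓ(σ) = max_{h ∈ F_ℓ} (1/m) ∑ σ_i h(x_i)`. Flipping one sign changes `Z_ℓ` by at most
`2λ/m`, so the bounded-differences argument on the cube `{±1}^m` (the two-point bound
`cosh s ≤ exp (s²/2)`, applied one coordinate at a time) shows that `Z_ℓ - 𝔼 Z_ℓ` is sub-Gaussian
with variance proxy `λ²/m`. For sub-Gaussian variables, Jensen's inequality gives
`exp (t 𝔼 max_ℓ Z_ℓ) ≤ ∑_ℓ 𝔼 exp (t Z_ℓ) ≤ M exp (t max_ℓ 𝔼 Z_ℓ + t² λ²/(2m))`, and optimising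
over `t > 0` yields the additive term `λ √(2 log M / m)`.
-/

open MeasureTheory ProbabilityTheory Real Finset Filter Topology
open scoped ENNReal NNReal

lemma le_add_sqrt_of_forall_le_add_div_add_mul {a b L c : ℝ} (hL : 0 ≤ L) (hc : 0 ≤ c)
    (h : ∀ t > 0, a ≤ b + L / t + c * t / 2) : a ≤ b + √(2 * c * L) := by
  -- The optimal `t = √(2L/c)` needs `c, L > 0`: perturb both by `δ` and let `δ → 0`.
  have hδ : ∀ δ > 0, a ≤ b + √(2 * (c + δ) * (L + δ)) := by
    intro δ hδ
    set u := √(2 * (c + δ) * (L + δ))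
    have hu : 0 < u := sqrt_pos.2 (by positivity)
    have hu2 : u ^ 2 = 2 * (c + δ) * (L + δ) := sq_sqrt (by positivity)
    have hbound := h (u / (c + δ)) (by positivity)
    have hmono : L / (u / (c + δ)) + c * (u / (c + δ)) / 2
        ≤ (L + δ) / (u / (c + δ)) + (c + δ) * (u / (c + δ)) / 2 := by
      gcongr <;> linarith
    have hopt : (L + δ) / (u / (c + δ)) + (c + δ) * (u / (c + δ)) / 2 = u := by
      field_simp
      nlinarith [hu2]
    linarith
  have hlim : Tendsto (fun δ => b + √(2 * (c + δ) * (L + δ))) (𝓝[>] 0) (𝓝 (b + √(2 * c * L))) := by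
    have : Continuous fun δ => b + √(2 * (c + δ) * (L + δ)) := by fun_prop
    simpa using (this.tendsto 0).mono_left nhdsWithin_le_nhds
  exact ge_of_tendsto hlim (eventually_nhdsWithin_of_forall hδ)

lemma fun_exp_mul_eq_mul_exp_mul_sub {α : Type*} (X : α → ℝ) (a t : ℝ) :
    (fun ω => exp (t * X ω)) = fun ω => exp (t * a) * exp (t * (X ω - a)) := by
  ext ω; rw [← exp_add]; ring_nf

lemma exp_mul_sup'_le_sum {ι : Type*} {s : Finset ι} (hs : s.Nonempty) (f : ι → ℝ) (t : ℝ) :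
    exp (t * s.sup' hs f) ≤ ∑ i ∈ s, exp (t * f i) := by
  obtain ⟨i, hi, hmax⟩ := s.exists_mem_eq_sup' hs f
  rw [hmax]
  exact Finset.single_le_sum (f := fun j => exp (t * f j)) (fun j _ => (exp_pos _).le) hi

section SubgaussianMaximal

variable {Ω : Type*} [MeasurableSpace Ω] {μ : Measure Ω}

lemma integrable_finset_sup' {ι : Type*} {s : Finset ι} (hs : s.Nonempty) {X : ι → Ω → ℝ}
    (hX : ∀ i ∈ s, Integrable (X i) μ) : Integrable (fun ω => s.sup' hs fun i => X i ω) μ := by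
  rw [show (fun ω => s.sup' hs fun i => X i ω) = s.sup' hs X from
    funext fun ω => (Finset.sup'_apply hs X ω).symm]
  exact Finset.sup'_induction hs X (p := (Integrable · μ)) (fun _ hf _ hg => hf.sup hg) hX

namespace ProbabilityTheory.HasSubgaussianMGF

variable {X : Ω → ℝ} {a : ℝ} {c : ℝ≥0}

lemma integrable_of_sub_const [IsFiniteMeasure μ] (h : HasSubgaussianMGF (fun ω => X ω - a) c μ) :
    Integrable X μ :=
  (h.integrable.add (integrable_const a)).congr (.of_forall fun ω => by simp)

lemma integrable_exp_mul_of_sub_const (h : HasSubgaussianMGF (fun ω => X ω - a) c μ) (t : ℝ) :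
    Integrable (fun ω => exp (t * X ω)) μ := by
  rw [fun_exp_mul_eq_mul_exp_mul_sub X a t]
  exact (h.integrable_exp_mul t).const_mul _

lemma integral_exp_mul_le_of_sub_const (h : HasSubgaussianMGF (fun ω => X ω - a) c μ) (t : ℝ) :
    ∫ ω, exp (t * X ω) ∂μ ≤ exp (t * a + c * t ^ 2 / 2) := by
  rw [fun_exp_mul_eq_mul_exp_mul_sub X a t, integral_const_mul, exp_add]
  gcongr
  exact h.mgf_le t

end ProbabilityTheory.HasSubgaussianMGF

variable {ι : Type*} {s : Finset ι} (hs : s.Nonempty) {X : ι → Ω → ℝ} {c : ℝ≥0}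

lemma integrable_exp_mul_finset_sup' (t : ℝ) (hX : ∀ i ∈ s, Integrable (X i) μ)
    (hXexp : ∀ i ∈ s, Integrable (fun ω => exp (t * X i ω)) μ) :
    Integrable (fun ω => exp (t * s.sup' hs fun i => X i ω)) μ :=
  (integrable_finsetSum _ hXexp).mono'
    (continuous_exp.comp_aestronglyMeasurable
      ((integrable_finset_sup' hs hX).aestronglyMeasurable.const_mul t))
    (.of_forall fun ω => by
      rw [Real.norm_of_nonneg (exp_pos _).le]
      exact exp_mul_sup'_le_sum hs _ t)

lemma integral_exp_mul_finset_sup'_le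
    (hX : ∀ i ∈ s, HasSubgaussianMGF (fun ω => X i ω - ∫ ω, X i ω ∂μ) c μ) {t : ℝ} (ht : 0 ≤ t) :
    ∫ ω, exp (t * s.sup' hs fun i => X i ω) ∂μ
      ≤ #s * exp (t * s.sup' hs (fun i => ∫ ω, X i ω ∂μ) + c * t ^ 2 / 2) :=
  calc ∫ ω, exp (t * s.sup' hs fun i => X i ω) ∂μ
      ≤ ∫ ω, ∑ i ∈ s, exp (t * X i ω) ∂μ :=
        integral_mono_of_nonneg (.of_forall fun ω => (exp_pos _).le)
          (integrable_finsetSum _ fun i hi => (hX i hi).integrable_exp_mul_of_sub_const t)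
          (.of_forall fun ω => exp_mul_sup'_le_sum hs _ t)
    _ = ∑ i ∈ s, ∫ ω, exp (t * X i ω) ∂μ :=
        integral_finsetSum _ fun i hi => (hX i hi).integrable_exp_mul_of_sub_const t
    _ ≤ ∑ i ∈ s, exp (t * s.sup' hs (fun i => ∫ ω, X i ω ∂μ) + c * t ^ 2 / 2) :=
        Finset.sum_le_sum fun i hi => ((hX i hi).integral_exp_mul_le_of_sub_const t).trans <| by
          gcongr; exact Finset.le_sup' (fun i => ∫ ω, X i ω ∂μ) hi
    _ = _ := by rw [Finset.sum_const, nsmul_eq_mul]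

theorem integral_finset_sup'_le_of_hasSubgaussianMGF [IsProbabilityMeasure μ]
    (hX : ∀ i ∈ s, HasSubgaussianMGF (fun ω => X i ω - ∫ ω, X i ω ∂μ) c μ) :
    ∫ ω, s.sup' hs (fun i => X i ω) ∂μ
      ≤ s.sup' hs (fun i => ∫ ω, X i ω ∂μ) + √(2 * c * log #s) := by
  set B := s.sup' hs fun i => ∫ ω, X i ω ∂μ
  have hint : ∀ i ∈ s, Integrable (X i) μ := fun i hi => (hX i hi).integrable_of_sub_const
  refine le_add_sqrt_of_forall_le_add_div_add_mul
    (log_nonneg (by exact_mod_cast hs.card_pos)) c.2 fun t ht => ?_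
  have hjensen : exp (∫ ω, t * s.sup' hs (fun i => X i ω) ∂μ)
      ≤ ∫ ω, exp (t * s.sup' hs fun i => X i ω) ∂μ :=
    convexOn_exp.map_integral_le continuousOn_exp isClosed_univ (by simp)
      ((integrable_finset_sup' hs hint).const_mul t)
      (integrable_exp_mul_finset_sup' hs t hint fun i hi =>
        (hX i hi).integrable_exp_mul_of_sub_const t)
  have hlog := (le_log_iff_exp_le (by positivity)).2
    (hjensen.trans (integral_exp_mul_finset_sup'_le hs hX ht.le))
  rw [integral_const_mul, log_mul (by simpa using hs.ne_empty) (exp_pos _).ne', log_exp] at hlog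
  have hrhs : B + log #s / t + c * t / 2 = (log #s + (t * B + c * t ^ 2 / 2)) / t := by
    field_simp; ring
  rw [hrhs, le_div_iff₀ ht]
  linarith

end SubgaussianMaximal

lemma exp_mul_add_exp_mul_le {a b c : ℝ} (h : |a - b| ≤ c) (t : ℝ) :
    exp (t * a) + exp (t * b) ≤ 2 * exp (t * ((a + b) / 2) + t ^ 2 * c ^ 2 / 8) := by
  have hcosh : cosh (t * ((a - b) / 2)) ≤ exp (t ^ 2 * c ^ 2 / 8) := by
    refine (cosh_le_exp_half_sq _).trans (exp_le_exp.2 ?_)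
    have : (a - b) ^ 2 ≤ c ^ 2 := sq_le_sq' (abs_le.1 h).1 (abs_le.1 h).2
    nlinarith [sq_nonneg t]
  calc exp (t * a) + exp (t * b)
      = 2 * cosh (t * ((a - b) / 2)) * exp (t * ((a + b) / 2)) := by
        rw [cosh_eq, mul_div_cancel₀ _ two_ne_zero, add_mul, ← exp_add, ← exp_add]
        congr 2 <;> ring
    _ ≤ 2 * exp (t ^ 2 * c ^ 2 / 8) * exp (t * ((a + b) / 2)) := by gcongr
    _ = 2 * exp (t * ((a + b) / 2) + t ^ 2 * c ^ 2 / 8) := by rw [exp_add]; ring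

lemma sum_boolCube_succ {n : ℕ} (F : (Fin (n + 1) → Bool) → ℝ) :
    ∑ ε, F ε = ∑ ε : Fin n → Bool, (F (Fin.cons true ε) + F (Fin.cons false ε)) := by
  rw [← (Fin.consEquiv fun _ => Bool).sum_comp, Fintype.sum_prod_type, Fintype.sum_bool,
    ← Finset.sum_add_distrib]
  rfl

theorem sum_exp_mul_le_of_bounded_differences {n : ℕ} (f : (Fin n → Bool) → ℝ) (c : Fin n → ℝ)
    (hf : ∀ ε i, |f ε - f (Function.update ε i (!ε i))| ≤ c i) (t : ℝ) :
    ∑ ε, exp (t * f ε)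
      ≤ 2 ^ n * exp (t * ((2 ^ n : ℝ)⁻¹ * ∑ ε, f ε) + t ^ 2 * (∑ i, c i ^ 2) / 8) := by
  induction n with
  | zero => simp
  | succ n ih =>
    set g : (Fin n → Bool) → ℝ := fun ε => (f (Fin.cons true ε) + f (Fin.cons false ε)) / 2
    have hg : ∀ ε i, |g ε - g (Function.update ε i (!ε i))| ≤ c i.succ := by
      intro ε i
      have htrue := hf (Fin.cons true ε) i.succ
      have hfalse := hf (Fin.cons false ε) i.succ
      rw [Fin.cons_succ, ← Fin.cons_update] at htrue hfalse
      simp only [g, abs_le] at htrue hfalse ⊢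
      constructor <;> linarith [htrue.1, htrue.2, hfalse.1, hfalse.2]
    have hpair : ∀ ε, exp (t * f (Fin.cons true ε)) + exp (t * f (Fin.cons false ε))
        ≤ 2 * exp (t * g ε + t ^ 2 * c 0 ^ 2 / 8) := fun ε =>
      exp_mul_add_exp_mul_le (by simpa using hf (Fin.cons true ε) 0) t
    have hsum : ∑ ε, f ε = 2 * ∑ ε, g ε := by
      rw [sum_boolCube_succ, Finset.mul_sum]
      exact Finset.sum_congr rfl fun ε _ => by ring
    calc ∑ ε, exp (t * f ε)
        ≤ ∑ ε, 2 * exp (t * g ε + t ^ 2 * c 0 ^ 2 / 8) := by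
          rw [sum_boolCube_succ]; exact Finset.sum_le_sum fun ε _ => hpair ε
      _ = 2 * exp (t ^ 2 * c 0 ^ 2 / 8) * ∑ ε, exp (t * g ε) := by
          rw [Finset.mul_sum]; exact Finset.sum_congr rfl fun ε _ => by rw [exp_add]; ring
      _ ≤ 2 * exp (t ^ 2 * c 0 ^ 2 / 8) * (2 ^ n * exp (t * ((2 ^ n : ℝ)⁻¹ * ∑ ε, g ε)
            + t ^ 2 * (∑ i : Fin n, c i.succ ^ 2) / 8)) := by gcongr; exact ih g _ hg
      _ = _ := by
          have hmean : ((2 : ℝ) ^ (n + 1))⁻¹ * (2 * ∑ ε, g ε) = (2 ^ n)⁻¹ * ∑ ε, g ε := by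
            rw [pow_succ]; field_simp
          rw [hsum, hmean, Fin.sum_univ_succ, pow_succ' (2 : ℝ) n, mul_mul_mul_comm, ← exp_add]
          congr 2; ring

def signVector {ι : Type*} (ε : ι → Bool) : ι → ℝ := fun i => if ε i then 1 else -1

lemma sum_signVector_mul_sub_flip {ι : Type*} [Fintype ι] [DecidableEq ι] (ε : ι → Bool) (i : ι)
    (a : ι → ℝ) :
    ∑ j, signVector ε j * a j - ∑ j, signVector (Function.update ε i (!ε i)) j * a j
      = 2 * signVector ε i * a i := by
  rw [← Finset.sum_sub_distrib, Finset.sum_eq_single i]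
  · cases hεi : ε i <;> simp [signVector, hεi] <;> ring
  · intro j _ hj
    simp [signVector, Function.update_of_ne hj]
  · simp

lemma abs_sup'_sub_sup'_le_s17 {κ : Type*} {s : Finset κ} (hs : s.Nonempty) {f g : κ → ℝ} {c : ℝ}
    (h : ∀ k ∈ s, |f k - g k| ≤ c) : |s.sup' hs f - s.sup' hs g| ≤ c := by
  have hle : ∀ f g : κ → ℝ, (∀ k ∈ s, |f k - g k| ≤ c) → s.sup' hs f ≤ s.sup' hs g + c :=
    fun f g h => Finset.sup'_le _ _ fun k hk => by
      linarith [(abs_le.1 (h k hk)).2, Finset.le_sup' g hk]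
  rw [abs_le]
  constructor
  · linarith [hle g f fun k hk => abs_sub_comm (f k) (g k) ▸ h k hk]
  · linarith [hle f g h]

lemma abs_sup'_signVector_sub_flip_le {ι κ : Type*} [Fintype ι] [DecidableEq ι] {s : Finset κ}
    (hs : s.Nonempty) (a : κ → ι → ℝ) (r : ℝ) {lam : ℝ} (ha : ∀ k ∈ s, ∀ i, |a k i| ≤ lam)
    (ε : ι → Bool) (i : ι) :
    |s.sup' hs (fun k => r * ∑ j, signVector ε j * a k j)
      - s.sup' hs (fun k => r * ∑ j, signVector (Function.update ε i (!ε i)) j * a k j)|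
      ≤ 2 * |r| * lam := by
  refine abs_sup'_sub_sup'_le_s17 hs fun k hk => ?_
  have hsign : |signVector ε i| = 1 := by cases hεi : ε i <;> simp [signVector, hεi]
  rw [← mul_sub, sum_signVector_mul_sub_flip, abs_mul, abs_mul, abs_mul, hsign, abs_two]
  have := ha k hk i
  have := abs_nonneg r
  nlinarith

noncomputable def fairCoin : Measure Bool :=
  (2⁻¹ : ℝ≥0∞) • Measure.dirac true + (2⁻¹ : ℝ≥0∞) • Measure.dirac false

instance : IsProbabilityMeasure fairCoin :=
  ⟨by simp [fairCoin, ← two_mul, ENNReal.mul_inv_cancel]⟩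

lemma fairCoin_singleton (b : Bool) : fairCoin {b} = 2⁻¹ := by
  cases b <;> simp [fairCoin]

lemma map_fairCoin :
    fairCoin.map (fun b : Bool => if b then (1 : ℝ) else -1)
      = (2⁻¹ : ℝ≥0∞) • Measure.dirac (1 : ℝ) + (2⁻¹ : ℝ≥0∞) • Measure.dirac (-1 : ℝ) := by
  rw [fairCoin, Measure.map_add _ _ measurable_from_top, Measure.map_smul, Measure.map_smul,
    Measure.map_dirac' measurable_from_top, Measure.map_dirac' measurable_from_top]
  simp

structure IsRademacher {Ω ι : Type*} [MeasurableSpace Ω] (σ : ι → Ω → ℝ) (μ : Measure Ω) :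
    Prop where
  measurable : ∀ i, Measurable (σ i)
  iIndepFun : iIndepFun σ μ
  map_eq : ∀ i, μ.map (σ i)
    = (2⁻¹ : ℝ≥0∞) • Measure.dirac (1 : ℝ) + (2⁻¹ : ℝ≥0∞) • Measure.dirac (-1 : ℝ)

namespace IsRademacher

variable {Ω ι : Type*} [MeasurableSpace Ω] {μ : Measure Ω} [IsProbabilityMeasure μ] [Fintype ι]
  {σ : ι → Ω → ℝ}

lemma map_eq_map_signVector (hσ : IsRademacher σ μ) :
    μ.map (fun ω i => σ i ω) = (Measure.pi fun _ : ι => fairCoin).map signVector := by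
  rw [(iIndepFun_iff_map_fun_eq_pi_map fun i => (hσ.measurable i).aemeasurable).1 hσ.iIndepFun]
  have := Measure.pi_map_pi (μ := fun _ : ι => fairCoin)
    (f := fun _ b => if b then (1 : ℝ) else -1) fun _ => measurable_from_top.aemeasurable
  refine (this.trans ?_).symm
  simp only [hσ.map_eq, map_fairCoin]

lemma integrable_comp [DecidableEq ι] (hσ : IsRademacher σ μ) {g : (ι → ℝ) → ℝ}
    (hg : Measurable g) :
    Integrable (fun ω => g fun i => σ i ω) μ := by
  have hvec : Measurable fun ω i => σ i ω := measurable_pi_lambda _ hσ.measurable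
  refine (integrable_map_measure hg.aestronglyMeasurable hvec.aemeasurable).1 ?_
  rw [hσ.map_eq_map_signVector,
    integrable_map_measure hg.aestronglyMeasurable Measurable.of_discrete.aemeasurable]
  exact .of_finite

lemma integral_comp [DecidableEq ι] (hσ : IsRademacher σ μ) {g : (ι → ℝ) → ℝ}
    (hg : Measurable g) :
    ∫ ω, g (fun i => σ i ω) ∂μ = (2 ^ Fintype.card ι : ℝ)⁻¹ * ∑ ε, g (signVector ε) := by
  have hvec : Measurable fun ω i => σ i ω := measurable_pi_lambda _ hσ.measurable
  rw [← integral_map hvec.aemeasurable hg.aestronglyMeasurable, hσ.map_eq_map_signVector,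
    integral_map Measurable.of_discrete.aemeasurable hg.aestronglyMeasurable,
    integral_fintype .of_finite, Finset.mul_sum]
  simp [measureReal_def, fairCoin_singleton]

theorem hasSubgaussianMGF_comp {m : ℕ} {σ : Fin m → Ω → ℝ} (hσ : IsRademacher σ μ)
    {g : (Fin m → ℝ) → ℝ} (hg : Measurable g) (c : Fin m → ℝ≥0)
    (hgc : ∀ ε i, |g (signVector ε) - g (signVector (Function.update ε i (!ε i)))| ≤ c i) :
    HasSubgaussianMGF (fun ω => g (fun i => σ i ω) - ∫ ω, g (fun i => σ i ω) ∂μ)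
      (∑ i, c i ^ 2 / 4) μ where
  integrable_exp_mul t := hσ.integrable_comp (g := fun v => exp (t * (g v - _))) (by fun_prop)
  mgf_le t := by
    set E := ∫ ω, g (fun i => σ i ω) ∂μ with hE
    rw [hσ.integral_comp hg, Fintype.card_fin] at hE
    have hmcd := sum_exp_mul_le_of_bounded_differences (fun ε => g (signVector ε)) _ hgc t
    rw [mgf, hσ.integral_comp (g := fun v => exp (t * (g v - E))) (by fun_prop), Fintype.card_fin]
    calc (2 ^ m : ℝ)⁻¹ * ∑ ε, exp (t * (g (signVector ε) - E))
        = (2 ^ m : ℝ)⁻¹ * exp (-(t * E)) * ∑ ε, exp (t * g (signVector ε)) := by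
          rw [mul_assoc, Finset.mul_sum _ _ (exp (-(t * E)))]
          congr 1
          refine Finset.sum_congr rfl fun ε _ => ?_
          rw [← exp_add]; ring_nf
      _ ≤ (2 ^ m : ℝ)⁻¹ * exp (-(t * E))
            * (2 ^ m * exp (t * E + t ^ 2 * (∑ i, (c i : ℝ) ^ 2) / 8)) := by
          rw [hE]; gcongr
      _ = exp ((∑ i, c i ^ 2 / 4 : ℝ≥0) * t ^ 2 / 2) := by
          rw [mul_mul_mul_comm, inv_mul_cancel₀ (by positivity), ← exp_add, one_mul]
          push_cast
          rw [← Finset.sum_div]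
          ring_nf

end IsRademacher

/-- Finite-union maximal inequality for Rademacher averages: the expected
maximum over a finite union of function classes of the empirical Rademacher
average is bounded by the largest class-wise expectation plus `λ·√(2·log M/m)`. -/
theorem finite_union_rademacher_maximal {Ω 𝒳 : Type*} [MeasurableSpace Ω]
    (μ : Measure Ω) [IsProbabilityMeasure μ]
    (m : ℕ) (hm : 1 ≤ m)
    (σ : Fin m → Ω → ℝ)
    (hσmeas : ∀ i, Measurable (σ i))
    (hσindep : iIndepFun σ μ)
    (hσunif : ∀ i, Measure.map (σ i) μ
      = (2⁻¹ : ENNReal) • Measure.dirac (1 : ℝ) + (2⁻¹ : ENNReal) • Measure.dirac (-1 : ℝ))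
    (x : Fin m → 𝒳) (lam : ℝ) (hlam : 0 ≤ lam)
    (M : ℕ) (hM : 1 ≤ M)
    (F : Fin M → Finset (𝒳 → ℝ))
    (hFne : ∀ l, (F l).Nonempty)
    (hFb : ∀ l, ∀ h ∈ F l, ∀ i, |h (x i)| ≤ lam) :
    ∫ ω, (Finset.univ.sup' ⟨⟨0, hM⟩, Finset.mem_univ _⟩ fun l : Fin M =>
        (F l).sup' (hFne l) fun h => (1 / (m : ℝ)) * ∑ i, σ i ω * h (x i)) ∂μ
    ≤ (Finset.univ.sup' ⟨⟨0, hM⟩, Finset.mem_univ _⟩ fun l : Fin M =>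
        ∫ ω, (F l).sup' (hFne l) (fun h => (1 / (m : ℝ)) * ∑ i, σ i ω * h (x i)) ∂μ)
      + lam * Real.sqrt (2 * Real.log M / m) := by
  have hσ : IsRademacher σ μ := ⟨hσmeas, hσindep, hσunif⟩
  set c : ℝ≥0 := ⟨2 * |1 / (m : ℝ)| * lam, by positivity⟩
  have hvar : ((∑ _i : Fin m, c ^ 2 / 4 : ℝ≥0) : ℝ) = lam ^ 2 / m := by
    have hm' : (m : ℝ) ≠ 0 := by positivity
    push_cast
    rw [Finset.sum_const, Finset.card_univ, Fintype.card_fin, nsmul_eq_mul]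
    change (m : ℝ) * ((2 * |1 / (m : ℝ)| * lam) ^ 2 / 4) = _
    rw [abs_of_pos (by positivity)]
    field_simp
    ring
  refine (integral_finset_sup'_le_of_hasSubgaussianMGF _ fun l _ =>
    hσ.hasSubgaussianMGF_comp
      (g := fun v => (F l).sup' (hFne l) fun h => (1 / (m : ℝ)) * ∑ i, v i * h (x i))
      (Continuous.finset_sup'_apply (hFne l) fun h _ => by fun_prop).measurable (fun _ => c)
      (abs_sup'_signVector_sub_flip_le (hFne l) (fun h i => h (x i)) _ (hFb l))).trans_eq ?_
  rw [hvar, card_univ, Fintype.card_fin,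
    show 2 * (lam ^ 2 / m) * log M = lam ^ 2 * (2 * log M / m) by ring,
    sqrt_mul (sq_nonneg _), sqrt_sq hlam]
end
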